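/- arXiv:2308.06109 — 9 statements merged into one kernel-verified Lean document; each statement's English description precedes it below -/
import Mathlib

section
/- If C is a q-ary simplex code of dimension k, then every m-dimensional subspace of C (0 ≤ m ≤ k) is the intersection of C with exactly (q^{k-m} - 1)/(q - 1) of the coordinate hyperplanes C_i = {x : x_i = 0}. -/
open Module Submodule

/-- A `q`-ary simplex code of dimension `k`: a `k`-dimensional subspace of `F^n`
whose coordinate functional restrictions are nonzero and pairwise non-proportional. -/
def IsSimplexCode {F : Type*} [Field F] {n : ℕ} (k : ℕ)
    (C : Submodule F (Fin n → F)) : Prop :=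
  Module.finrank F ↥C = k ∧
  (∀ i : Fin n, ∃ c ∈ C, c i ≠ 0) ∧
  (∀ i j : Fin n, i ≠ j → ∀ a : F, ∃ c ∈ C, c j ≠ a * c i)

private lemma card_ne_aux {M : Type*} [Finite M] (x : M) :
    Nat.card {a : M // a ≠ x} = Nat.card M - 1 := by
  classical
  have := Fintype.ofFinite M
  simp [Nat.card_eq_fintype_card, Fintype.card_subtype_compl, Fintype.card_subtype_eq]

section Aux

variable {F : Type*} [Field F] [Fintype F] {q n k : ℕ}
variable {V : Type*} [AddCommGroup V] [Module F V] [FiniteDimensional F V]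

private lemma simplex_bij (hq : Fintype.card F = q) (hV : finrank F V = k)
    (hn : n * (q - 1) = q ^ k - 1)
    (φ : Fin n → V) (h0 : ∀ i, φ i ≠ 0)
    (hprop : ∀ i j : Fin n, i ≠ j → ∀ a : F, φ j ≠ a • φ i) :
    Function.Bijective (fun p : Fin n × {a : F // a ≠ 0} =>
      (⟨p.2.1 • φ p.1, smul_ne_zero p.2.2 (h0 p.1)⟩ : {v : V // v ≠ 0})) := by
  have hFV : Finite V := Module.finite_of_finite F
  have hinj : Function.Injective (fun p : Fin n × {a : F // a ≠ 0} =>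
      (⟨p.2.1 • φ p.1, smul_ne_zero p.2.2 (h0 p.1)⟩ : {v : V // v ≠ 0})) := by
    rintro ⟨i, a, ha⟩ ⟨j, b, hb⟩ h
    simp only [Subtype.mk.injEq] at h
    by_cases hij : i = j
    · subst hij
      have hab : a = b := by
        by_contra hab
        have : (a - b) • φ i = 0 := by rw [sub_smul, h, sub_self]
        rcases smul_eq_zero.mp this with h' | h'
        · exact hab (sub_eq_zero.mp h')
        · exact h0 i h'
      simp [hab]
    · have hji : (b⁻¹ * a) • φ i = φ j := by rw [mul_smul, h, inv_smul_smul₀ hb]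
      exact absurd hji.symm (hprop i j hij (b⁻¹ * a))
  refine (Nat.bijective_iff_injective_and_card _).mpr ⟨hinj, ?_⟩
  have hcV : Nat.card V = q ^ k := by
    have := Fintype.ofFinite V
    rw [Nat.card_eq_fintype_card, card_eq_pow_finrank (K := F), hq, hV]
  rw [Nat.card_prod, Nat.card_eq_fintype_card (α := Fin n), Fintype.card_fin,
    card_ne_aux (0 : F), card_ne_aux (0 : V), hcV, Nat.card_eq_fintype_card (α := F), hq, hn]

private lemma simplex_count (hq : Fintype.card F = q) (hV : finrank F V = k)
    (hn : n * (q - 1) = q ^ k - 1)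
    (φ : Fin n → V) (h0 : ∀ i, φ i ≠ 0)
    (hprop : ∀ i j : Fin n, i ≠ j → ∀ a : F, φ j ≠ a • φ i)
    (W : Submodule F V) :
    {i : Fin n | φ i ∈ W}.ncard * (q - 1) = q ^ (finrank F ↥W) - 1 := by
  have hFV : Finite V := Module.finite_of_finite F
  have hbij := simplex_bij hq hV hn φ h0 hprop
  set T := {i : Fin n | φ i ∈ W} with hT
  have key : Function.Bijective (fun p : ↥T × {a : F // a ≠ 0} =>
      (⟨⟨p.2.1 • φ p.1.1, W.smul_mem _ p.1.2⟩,
        by simp only [ne_eq, Submodule.mk_eq_zero]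
           exact smul_ne_zero p.2.2 (h0 p.1.1)⟩ : {w : ↥W // w ≠ 0})) := by
    constructor
    · rintro ⟨⟨i, hi⟩, a⟩ ⟨⟨j, hj⟩, b⟩ h
      simp only [Subtype.mk.injEq] at h
      have := hbij.injective (a₁ := (i, a)) (a₂ := (j, b)) (Subtype.ext h)
      simp only [Prod.mk.injEq] at this
      exact Prod.ext (Subtype.ext this.1) this.2
    · rintro ⟨⟨w, hwW⟩, hw0⟩
      have hw0' : w ≠ 0 := by simpa [Submodule.mk_eq_zero] using hw0
      obtain ⟨⟨i, a⟩, hia⟩ := hbij.surjective ⟨w, hw0'⟩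
      have hia' : a.1 • φ i = w := congrArg Subtype.val hia
      have hi : i ∈ T := by
        have : φ i = a.1⁻¹ • w := by rw [← hia', smul_smul, inv_mul_cancel₀ a.2, one_smul]
        rw [hT, Set.mem_setOf_eq, this]
        exact W.smul_mem _ hwW
      exact ⟨⟨⟨i, hi⟩, a⟩, Subtype.ext (Subtype.ext hia')⟩
  have hcard := Nat.card_eq_of_bijective _ key
  have hcW : Nat.card ↥W = q ^ (finrank F ↥W) := by
    have := Fintype.ofFinite ↥W
    rw [Nat.card_eq_fintype_card, card_eq_pow_finrank (K := F), hq]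
  rw [Nat.card_prod, card_ne_aux (0 : F), card_ne_aux (0 : ↥W), hcW,
    Nat.card_eq_fintype_card (α := F), hq, Nat.card_coe_set_eq] at hcard
  exact hcard

end Aux

set_option synthInstance.maxHeartbeats 1000000 in
theorem simplex_subspace_intersection_of_hyperplanes {F : Type*} [Field F] [Fintype F]
    {q n k m : ℕ} (hq : Fintype.card F = q) (hk : 2 ≤ k)
    (hn : n * (q - 1) = q ^ k - 1)
    (C : Submodule F (Fin n → F)) (hC : IsSimplexCode k C)
    (X : Submodule F (Fin n → F)) (hXC : X ≤ C)
    (hm : Module.finrank F ↥X = m) (hmk : m ≤ k) :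
    {i : Fin n | X ≤ LinearMap.ker (LinearMap.proj i : (Fin n → F) →ₗ[F] F)}.ncard
      = (q ^ (k - m) - 1) / (q - 1) ∧
    X = C ⊓ ⨅ i ∈ {i : Fin n | X ≤ LinearMap.ker (LinearMap.proj i : (Fin n → F) →ₗ[F] F)},
          LinearMap.ker (LinearMap.proj i : (Fin n → F) →ₗ[F] F) := by
  obtain ⟨hC1, hC2, hC3⟩ := hC
  set φ : Fin n → Module.Dual F ↥C :=
    fun i => (LinearMap.proj i : (Fin n → F) →ₗ[F] F).comp C.subtype with hφ
  have hφapp : ∀ (i : Fin n) (c : ↥C), φ i c = (c : Fin n → F) i := fun _ _ => rfl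
  have h0 : ∀ i, φ i ≠ 0 := by
    intro i h
    obtain ⟨c, hc, hci⟩ := hC2 i
    exact hci (by simpa [hφapp] using congrFun (congrArg DFunLike.coe h) ⟨c, hc⟩)
  have hprop : ∀ i j : Fin n, i ≠ j → ∀ a : F, φ j ≠ a • φ i := by
    intro i j hij a h
    obtain ⟨c, hc, hne⟩ := hC3 i j hij a
    have := congrFun (congrArg DFunLike.coe h) ⟨c, hc⟩
    simp only [hφapp, LinearMap.smul_apply, smul_eq_mul] at this
    exact hne (by simpa [hφapp] using this)
  have hV : finrank F (Module.Dual F ↥C) = k := by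
    rw [Subspace.dual_finrank_eq, hC1]
  set X' : Submodule F ↥C := X.comap C.subtype with hX'
  set W : Submodule F (Module.Dual F ↥C) := X'.dualAnnihilator with hW
  set S := {i : Fin n | X ≤ LinearMap.ker (LinearMap.proj i : (Fin n → F) →ₗ[F] F)} with hSdef
  have hmem : ∀ i : Fin n, φ i ∈ W ↔ i ∈ S := by
    intro i
    rw [hW, Submodule.mem_dualAnnihilator]
    constructor
    · intro h x hx
      rw [LinearMap.mem_ker]
      exact h ⟨x, hXC hx⟩ (by simpa [hX'] using hx)
    · intro h w hw
      have : (w : Fin n → F) ∈ X := by simpa [hX'] using hw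
      simpa [hφapp] using h this
  have hSeq : S = {i : Fin n | φ i ∈ W} := by
    ext i; exact (hmem i).symm
  have hm' : finrank F ↥X' = m := by
    rw [← hm]; exact (Submodule.comapSubtypeEquivOfLe hXC).finrank_eq
  have hfd : FiniteDimensional F ↥C := inferInstance
  have hWrank : finrank F ↥W = k - m := by
    have h1 : finrank F (↥C ⧸ X') + finrank F ↥X' = finrank F ↥C :=
      Submodule.finrank_quotient_add_finrank X'
    have h2 : finrank F ↥W = finrank F (↥C ⧸ X') :=
      ((Subspace.quotEquivAnnihilator X').finrank_eq).symm
    rw [hC1, hm'] at h1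
    omega
  have hcount := simplex_count hq hV hn φ h0 hprop W
  have hq2 : 2 ≤ q := hq ▸ Fintype.one_lt_card
  constructor
  · rw [hSeq, ← hWrank, ← hcount, Nat.mul_div_cancel _ (by omega : 0 < q - 1)]
  · apply le_antisymm
    · exact le_inf hXC (le_iInf fun i => le_iInf fun hi => hi)
    · intro x hx
      rw [Submodule.mem_inf] at hx
      obtain ⟨hxC, hxI⟩ := hx
      have hxi : ∀ i ∈ S, x i = 0 := by
        intro i hi
        have := (Submodule.mem_iInf _).mp hxI i
        have := (Submodule.mem_iInf _).mp this hi
        simpa using this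
      have hxc : (⟨x, hxC⟩ : ↥C) ∈ X' := by
        rw [← Subspace.forall_mem_dualAnnihilator_apply_eq_zero_iff X']
        intro ψ hψ
        by_cases hψ0 : ψ = 0
        · simp [hψ0]
        · obtain ⟨⟨i, a⟩, hia⟩ :=
            (simplex_bij hq hV hn φ h0 hprop).surjective ⟨ψ, hψ0⟩
          have hia' : a.1 • φ i = ψ := congrArg Subtype.val hia
          have hiW : φ i ∈ W := by
            rw [hW]
            have : φ i = a.1⁻¹ • ψ := by
              rw [← hia', smul_smul, inv_mul_cancel₀ a.2, one_smul]
            rw [this]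
            exact Submodule.smul_mem _ _ hψ
          have hiS : i ∈ S := (hmem i).mp hiW
          rw [← hia']
          simp only [LinearMap.smul_apply, hφapp, smul_eq_mul]
          rw [hxi i hiS, mul_zero]
      simpa [hX'] using hxc
end

section
/- Let M be a generator matrix of an m-dimensional code X ⊆ F_q^n with n = (q^k-1)/(q-1) and m < k. If M contains exactly (q^{k-m}-1)/(q-1) zero columns and each nonzero column of M is proportional to exactly q^{k-m} columns including itself, then X is contained in some q-ary simplex code of dimension k. -/
open Module Submodule

section Aux
variable (F : Type*) [Field F] (V : Type*) [AddCommGroup V] [Module F V]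

noncomputable def projProdEquiv : (Projectivization F V) × Fˣ ≃ {v : V // v ≠ 0} :=
  Equiv.ofBijective
    (fun pa => ⟨(pa.2 : F) • pa.1.rep, by
      simp [smul_eq_zero, Projectivization.rep_nonzero, pa.2.ne_zero]⟩) (by
    constructor
    · rintro ⟨p, a⟩ ⟨p', a'⟩ h
      simp only [Subtype.mk.injEq] at h
      have hps : Projectivization.mk F ((a : F) • p.rep)
          (by simp [smul_eq_zero, Projectivization.rep_nonzero, a.ne_zero]) = p := by
        conv_rhs => rw [← p.mk_rep]
        exact (Projectivization.mk_eq_mk_iff F _ _ _ _).2 ⟨a, rfl⟩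
      have hps' : Projectivization.mk F ((a' : F) • p'.rep)
          (by simp [smul_eq_zero, Projectivization.rep_nonzero, a'.ne_zero]) = p' := by
        conv_rhs => rw [← p'.mk_rep]
        exact (Projectivization.mk_eq_mk_iff F _ _ _ _).2 ⟨a', rfl⟩
      have hpp : p = p' := by
        rw [← hps, ← hps']
        congr 1
      subst hpp
      have h2 : ((a : F) - a') • p.rep = 0 := by
        rw [sub_smul, h, sub_self]
      have h3 : (a : F) = a' := by
        rcases smul_eq_zero.1 h2 with h4 | h4
        · exact sub_eq_zero.1 h4
        · exact absurd h4 p.rep_nonzero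
      exact Prod.ext rfl (Units.ext h3)
    · rintro ⟨v, hv⟩
      obtain ⟨a, ha⟩ := Projectivization.exists_smul_eq_mk_rep F v hv
      refine ⟨⟨Projectivization.mk F v hv, a⁻¹⟩, ?_⟩
      ext
      simp only
      rw [← ha]
      simp [Units.smul_def, smul_smul])
end Aux

section Aux2
variable (F : Type*) [Field F] [Fintype F]

instance projFinite (V : Type*) [AddCommGroup V] [Module F V] [Finite V] :
    Finite (Projectivization F V) := by
  refine Finite.of_surjective (fun v : {v : V // v ≠ 0} => Projectivization.mk F v.1 v.2) ?_
  intro p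
  exact ⟨⟨p.rep, p.rep_nonzero⟩, p.mk_rep⟩

lemma card_projectivization (d : ℕ) :
    Nat.card (Projectivization F (Fin d → F)) * (Fintype.card F - 1)
      = Fintype.card F ^ d - 1 := by
  classical
  have h := Nat.card_congr (projProdEquiv F (Fin d → F))
  rw [Nat.card_prod] at h
  have h1 : Nat.card {v : Fin d → F // v ≠ 0} = Fintype.card F ^ d - 1 := by
    rw [Nat.card_eq_fintype_card]
    have h2 : Fintype.card {v : Fin d → F // ¬ v = 0} =
        Fintype.card (Fin d → F) - Fintype.card {v : Fin d → F // v = 0} :=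
      Fintype.card_subtype_compl _
    simpa [Fintype.card_subtype_eq] using h2
  have h3 : Nat.card Fˣ = Fintype.card F - 1 := by
    rw [Nat.card_eq_fintype_card, Fintype.card_units]
  rw [h1, h3] at h
  exact h

lemma card_projectivization' (d : ℕ) :
    Nat.card (Projectivization F (Fin d → F))
      = (Fintype.card F ^ d - 1) / (Fintype.card F - 1) := by
  have hq : 0 < Fintype.card F - 1 := by
    have := Fintype.one_lt_card (α := F)
    omega
  exact (Nat.div_eq_of_eq_mul_left hq (card_projectivization F d).symm).symm
end Aux2

theorem simplex_subcode_of_generator_matrix {F : Type*} [Field F] [Fintype F]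
    {q n k m : ℕ} (hq : Fintype.card F = q) (hk : 2 ≤ k)
    (hn : n * (q - 1) = q ^ k - 1) (hmk : m < k)
    (X : Submodule F (Fin n → F))
    (M : Matrix (Fin m) (Fin n) F)
    (hMli : LinearIndependent F (fun i => M i))
    (hMspan : Submodule.span F (Set.range fun i => M i) = X)
    (hzero : {j : Fin n | ∀ i, M i j = 0}.ncard = (q ^ (k - m) - 1) / (q - 1))
    (hprop : ∀ j : Fin n, (∃ i, M i j ≠ 0) →
      {j' : Fin n | ∃ a : F, a ≠ 0 ∧ ∀ i, M i j' = a * M i j}.ncard = q ^ (k - m)) :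
    ∃ C : Submodule F (Fin n → F), IsSimplexCode k C ∧ X ≤ C := by
  classical
  set d := k - m with hd
  set col : Fin n → (Fin m → F) := fun j i => M i j with hcol
  set Z : Set (Fin n) := {j : Fin n | ∀ i, M i j = 0} with hZdef
  -- an equivalence between the zero columns and the projective space of F^d
  have hZcard : Nat.card Z = Nat.card (Projectivization F (Fin d → F)) := by
    rw [card_projectivization' F d, Nat.card_coe_set_eq, hzero, hq]
  obtain ⟨eZ⟩ : Nonempty (Z ≃ Projectivization F (Fin d → F)) := Finite.card_eq.mp hZcard
  -- the proportionality classes of nonzero columns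
  set S : Projectivization F (Fin m → F) → Set (Fin n) :=
    fun p => {j | ∃ h : col j ≠ 0, Projectivization.mk F (col j) h = p} with hSdef
  have hSmem : ∀ (j : Fin n) (hj : col j ≠ 0), j ∈ S (Projectivization.mk F (col j) hj) :=
    fun j hj => ⟨hj, rfl⟩
  have hScard : ∀ (j : Fin n) (hj : col j ≠ 0),
      Nat.card (S (Projectivization.mk F (col j) hj)) = Nat.card (Fin d → F) := by
    intro j hj
    have hset : S (Projectivization.mk F (col j) hj)
        = {j' : Fin n | ∃ a : F, a ≠ 0 ∧ ∀ i, M i j' = a * M i j} := by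
      ext j'
      constructor
      · rintro ⟨h, hmk⟩
        obtain ⟨a, ha⟩ := (Projectivization.mk_eq_mk_iff F _ _ _ _).1 hmk
        refine ⟨a, a.ne_zero, fun i => ?_⟩
        have := congrFun ha i
        simpa [hcol, Units.smul_def] using this.symm
      · rintro ⟨a, ha, hcols⟩
        have hcj' : col j' = a • col j := funext fun i => hcols i
        have hne : col j' ≠ 0 := by
          rw [hcj']
          exact smul_ne_zero ha hj
        refine ⟨hne, (Projectivization.mk_eq_mk_iff F _ _ _ _).2 ⟨Units.mk0 a ha, ?_⟩⟩
        rw [hcj']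
        simp [Units.smul_def]
    rw [hset, Nat.card_coe_set_eq]
    have hex : ∃ i, M i j ≠ 0 := by
      by_contra hno
      push_neg at hno
      exact hj (funext fun i => hno i)
    rw [hprop j hex, Nat.card_eq_fintype_card]
    simp [hq]
  have hSne : ∀ (j : Fin n) (hj : col j ≠ 0),
      Nonempty (↥(S (Projectivization.mk F (col j) hj)) ≃ (Fin d → F)) :=
    fun j hj => Finite.card_eq.mp (hScard j hj)
  -- the coordinate assignment within each class
  set E : ∀ p : Projectivization F (Fin m → F), ↥(S p) → (Fin d → F) := fun p =>
    if h : Nonempty (↥(S p) ≃ (Fin d → F)) then h.some else fun _ => 0 with hEdef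
  have hEinj : ∀ p, Nonempty (↥(S p) ≃ (Fin d → F)) → Function.Injective (E p) := by
    intro p h
    simp only [hEdef, dif_pos h]
    exact h.some.injective
  have Econg : ∀ (p₁ p₂ : Projectivization F (Fin m → F)) (hp : p₁ = p₂) (jj : Fin n)
      (m1 : jj ∈ S p₁) (m2 : jj ∈ S p₂), E p₁ ⟨jj, m1⟩ = E p₂ ⟨jj, m2⟩ := by
    rintro p₁ _ rfl jj m1 m2
    rfl
  -- the scalars relating each column to the representative of its class
  have hrepex : ∀ (j : Fin n) (hj : col j ≠ 0),
      ∃ u : Fˣ, (u : F) • (Projectivization.mk F (col j) hj).rep = col j :=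
    fun j hj => (Projectivization.mk_eq_mk_iff F _ _ hj
      (Projectivization.rep_nonzero _)).1 (Projectivization.mk_rep _).symm
  choose u hu using hrepex
  have hZmem : ∀ j : Fin n, col j = 0 → j ∈ Z := fun j h i => congrFun h i
  -- the bottom rows
  set b : Fin n → (Fin d → F) := fun j =>
    if hj : col j ≠ 0 then
      (u j hj : F) • E (Projectivization.mk F (col j) hj) ⟨j, hSmem j hj⟩
    else (eZ ⟨j, hZmem j (not_not.1 hj)⟩).rep with hbdef
  have hbZ : ∀ (j : Fin n) (hj : j ∈ Z), b j = (eZ ⟨j, hj⟩).rep := by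
    intro j hj
    have hc : ¬ col j ≠ 0 := not_not.2 (funext fun i => hj i)
    simp only [hbdef, dif_neg hc]
  have hbnz : ∀ (j : Fin n) (hj : col j ≠ 0),
      b j = (u j hj : F) • E (Projectivization.mk F (col j) hj) ⟨j, hSmem j hj⟩ := by
    intro j hj
    simp only [hbdef, dif_pos hj]
  -- the rows of the extended generator matrix
  set r : (Fin m ⊕ Fin d) → (Fin n → F) := Sum.elim (fun i => M i) (fun i j => b j i) with hrdef
  -- linear independence of the rows
  have hli : LinearIndependent F r := by
    rw [Fintype.linearIndependent_iff]
    intro g hg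
    have hgj : ∀ j : Fin n, (∑ i : Fin m, g (Sum.inl i) * M i j)
        + (∑ i : Fin d, g (Sum.inr i) * b j i) = 0 := by
      intro j
      have := congrFun hg j
      simp only [Finset.sum_apply, Pi.zero_apply] at this
      rw [← this, Fintype.sum_sum_type]
      simp [hrdef]
    have hrep0 : ∀ p : Projectivization F (Fin d → F),
        (∑ i : Fin d, g (Sum.inr i) * p.rep i) = 0 := by
      intro p
      have hz := hgj (eZ.symm p).1
      have hb : b (eZ.symm p).1 = p.rep := by
        rw [hbZ _ (eZ.symm p).2]
        congr 1
        rw [Subtype.coe_eta, eZ.apply_symm_apply]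
      rw [hb] at hz
      have hzero1 : (∑ i : Fin m, g (Sum.inl i) * M i (eZ.symm p).1) = 0 := by
        apply Finset.sum_eq_zero
        intro i _
        rw [(eZ.symm p).2 i, mul_zero]
      rw [hzero1, zero_add] at hz
      exact hz
    have hw0 : ∀ w : Fin d → F, (∑ i : Fin d, g (Sum.inr i) * w i) = 0 := by
      intro w
      by_cases hw : w = 0
      · simp [hw]
      · obtain ⟨a, ha⟩ := Projectivization.exists_smul_eq_mk_rep F w hw
        have := hrep0 (Projectivization.mk F w hw)
        rw [← ha] at this
        have h2 : (a : F) * (∑ i : Fin d, g (Sum.inr i) * w i) = 0 := by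
          rw [Finset.mul_sum, ← this]
          apply Finset.sum_congr rfl
          intro i _
          simp [Units.smul_def]
          ring
        rcases mul_eq_zero.1 h2 with h3 | h3
        · exact absurd h3 a.ne_zero
        · exact h3
    have hinr : ∀ i : Fin d, g (Sum.inr i) = 0 := by
      intro i
      have := hw0 (Pi.single i 1)
      simpa [Pi.single_apply, mul_ite, Finset.sum_ite_eq'] using this
    have hinl : ∀ i : Fin m, g (Sum.inl i) = 0 := by
      have hsum : (∑ i : Fin m, g (Sum.inl i) • M i) = 0 := by
        funext j
        rw [Finset.sum_apply]
        have := hgj j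
        simp only [hinr, zero_mul, Finset.sum_const_zero, add_zero] at this
        simpa using this
      exact Fintype.linearIndependent_iff.1 hMli _ hsum
    intro i
    cases i with
    | inl i => exact hinl i
    | inr i => exact hinr i
  refine ⟨Submodule.span F (Set.range r), ⟨?_, ?_, ?_⟩, ?_⟩
  · rw [finrank_span_eq_card hli]
    simp only [Fintype.card_sum, Fintype.card_fin]
    omega
  · -- every coordinate functional is nonzero on C
    intro j
    by_cases hc : col j = 0
    · have hb := hbZ j (hZmem j hc)
      have hbne : b j ≠ 0 := by
        rw [hb]
        exact Projectivization.rep_nonzero _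
      obtain ⟨i, hi⟩ := Function.ne_iff.1 hbne
      exact ⟨r (  Sum.inr i), subset_span ⟨Sum.inr i, rfl⟩, by simpa [hrdef] using hi⟩
    · obtain ⟨i, hi⟩ := Function.ne_iff.1 hc
      exact ⟨r (Sum.inl i), subset_span ⟨Sum.inl i, rfl⟩, by simpa [hrdef, hcol] using hi⟩
  · -- pairwise non-proportionality of the coordinates
    intro j j' hjj' a
    by_contra hcon
    push_neg at hcon
    have hM : ∀ i : Fin m, M i j' = a * M i j :=
      fun i => hcon (r (Sum.inl i)) (subset_span ⟨Sum.inl i, rfl⟩)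
    have hb : ∀ i : Fin d, b j' i = a * b j i :=
      fun i => hcon (r (Sum.inr i)) (subset_span ⟨Sum.inr i, rfl⟩)
    by_cases ha : a = 0
    · -- then the column j' of the extended matrix would be zero
      subst ha
      have hc' : col j' = 0 := funext fun i => by simpa using hM i
      have hb0 : b j' = 0 := funext fun i => by simpa using hb i
      have := hbZ j' (hZmem j' hc')
      rw [hb0] at this
      exact Projectivization.rep_nonzero _ this.symm
    · by_cases hcj : col j = 0
      · -- both columns are zero columns
        have hc' : col j' = 0 := funext fun i => by
          rw [hcol]
          simp only
          rw [hM i, show M i j = col j i from rfl, hcj]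
          simp
        have hbj := hbZ j (hZmem j hcj)
        have hbj' := hbZ j' (hZmem j' hc')
        have e1 : eZ ⟨j', hZmem j' hc'⟩ = eZ ⟨j, hZmem j hcj⟩ := by
          rw [← Projectivization.mk_rep (eZ ⟨j', hZmem j' hc'⟩),
            ← Projectivization.mk_rep (eZ ⟨j, hZmem j hcj⟩)]
          refine (Projectivization.mk_eq_mk_iff' F _ _ _ _).2 ⟨a, ?_⟩
          rw [← hbj, ← hbj']
          exact funext fun i => by simpa using (hb i).symm
        have := eZ.injective e1
        rw [Subtype.mk.injEq] at this
        exact hjj' this.symm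
      · -- both columns are nonzero
        have hc' : col j' ≠ 0 := by
          intro h0
          apply hcj
          funext i
          have h1 : a * M i j = 0 := by rw [← hM i]; exact congrFun h0 i
          rcases mul_eq_zero.1 h1 with h2 | h2
          · exact absurd h2 ha
          · simpa [hcol] using h2
        have hpp : Projectivization.mk F (col j') hc' = Projectivization.mk F (col j) hcj := by
          refine (Projectivization.mk_eq_mk_iff' F _ _ _ _).2 ⟨a, ?_⟩
          exact funext fun i => by simpa [hcol] using (hM i).symm
        -- relate the scalars
        have hscal : (u j' hc' : F) = a * (u j hcj : F) := by
          have h1 := hu j' hc'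
          have h2 := hu j hcj
          rw [hpp] at h1
          have h3 : (u j' hc' : F) • (Projectivization.mk F (col j) hcj).rep
              = (a * (u j hcj : F)) • (Projectivization.mk F (col j) hcj).rep := by
            rw [h1, mul_smul, h2]
            exact funext fun i => by simpa [hcol] using hM i
          have h4 : ((u j' hc' : F) - a * (u j hcj : F)) •
              (Projectivization.mk F (col j) hcj).rep = 0 := by
            rw [sub_smul, h3, sub_self]
          rcases smul_eq_zero.1 h4 with h5 | h5
          · exact sub_eq_zero.1 h5
          · exact absurd h5 (Projectivization.rep_nonzero _)
        -- derive equality of the E-values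
        have hbj := hbnz j hcj
        have hbj' := hbnz j' hc'
        have hmem' : j' ∈ S (Projectivization.mk F (col j) hcj) := ⟨hc', hpp⟩
        have hEe : E (Projectivization.mk F (col j') hc') ⟨j', hSmem j' hc'⟩
            = E (Projectivization.mk F (col j) hcj) ⟨j', hmem'⟩ :=
          Econg _ _ hpp j' _ _
        have hkey : (u j' hc' : F) • E (Projectivization.mk F (col j) hcj) ⟨j', hmem'⟩
            = (u j' hc' : F) • E (Projectivization.mk F (col j) hcj) ⟨j, hSmem j hcj⟩ := by
          rw [← hEe, ← hbj']
          rw [hscal, mul_smul, ← hbj]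
          exact funext fun i => by simpa using hb i
        have hEeq : E (Projectivization.mk F (col j) hcj) ⟨j', hmem'⟩
            = E (Projectivization.mk F (col j) hcj) ⟨j, hSmem j hcj⟩ :=
          smul_right_injective _ (Units.ne_zero (u j' hc')) hkey
        have := hEinj _ (hSne j hcj) hEeq
        rw [Subtype.mk.injEq] at this
        exact hjj' this.symm
  · -- X is contained in C
    rw [← hMspan]
    apply Submodule.span_mono
    rintro _ ⟨i, rfl⟩
    exact ⟨Sum.inl i, rfl⟩
end

section
/- Suppose (q,k) ≠ (2,2). Then for every m ∈ {0,…,k-1} and every m-dimensional subcode X of a q-ary simplex code of dimension k, there exist two distinct simplex codes C, C' with C ∩ C' = X. -/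
/-!
Write `V = C₀` and `φᵢ` for its coordinate functionals. By counting, every nonzero functional on
`V` is a multiple of exactly one `φᵢ`, so a bijection `σ` of `V*` commuting with scalars permutes
the projective points of `V*`, and the code `C'` with coordinate functionals `σ φᵢ` is again a
simplex code. An element of `C₀ ∩ C'` is a pair `u, v ∈ V` with `f u = σ f v` for all `f`. If the
fixed points of `σ` span `V*` this forces `u = v`, after which `u` is killed by every `σ f - f`;
so if these differences span the annihilator `A` of `X`, the two codes meet exactly in `X`.

Such a `σ` exists whenever `A ≠ 0`: for `q ≥ 3`, scale by some `μ ∉ {0, 1}` on a union of two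
proper subspaces with sum `A`; for `q = 2`, run a cycle through the nonzero vectors of such a
union (the differences of a cycle span the affine span of its support), or swap `f` and `f + g`
when `A = F g`. The fixed points still span because `(q, k) ≠ (2, 2)`.
-/

open Module Submodule

namespace Module.Dual

variable {F V : Type*} [Field F] [AddCommGroup V] [Module F V]

theorem apply_eq_zero_of_mem_span {s : Set (Dual F V)} {w : V} (h : ∀ f ∈ s, f w = 0)
    {g : Dual F V} (hg : g ∈ span F s) : g w = 0 :=
  span_le (p := LinearMap.ker (Dual.eval F V w)).2 h hg

theorem eq_of_span_eq_top_of_apply_eq {s : Set (Dual F V)} (hs : span F s = ⊤) {u v : V}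
    (h : ∀ f ∈ s, f u = f v) : u = v := by
  rw [← sub_eq_zero, ← forall_dual_apply_eq_zero_iff F]
  exact fun g => apply_eq_zero_of_mem_span (fun f hf => by simp [h f hf]) (hs ▸ mem_top)

end Module.Dual

namespace Submodule

variable {F E : Type*} [Field F] [AddCommGroup E] [Module F E]

theorem span_compl_eq_top {A : Submodule F E} (hA : A ≠ ⊤) : span F (A : Set E)ᶜ = ⊤ := by
  obtain ⟨x, -, hx⟩ := SetLike.exists_of_lt (lt_top_iff_ne_top.2 hA)
  refine eq_top_iff'.2 fun y => ?_
  by_cases hy : y ∈ A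
  · have hyx : y + x ∉ A := fun h => hx (by simpa using A.sub_mem h hy)
    simpa using sub_mem (subset_span hyx) (subset_span hx : x ∈ span F (A : Set E)ᶜ)
  · exact subset_span hy

theorem exists_notMem_of_ne_top_of_ne_top {A₁ A₂ : Submodule F E} (h₁ : A₁ ≠ ⊤) (h₂ : A₂ ≠ ⊤) :
    ∃ x, x ∉ A₁ ∧ x ∉ A₂ := by
  obtain ⟨a, -, ha⟩ := SetLike.exists_of_lt (lt_top_iff_ne_top.2 h₁)
  obtain ⟨b, -, hb⟩ := SetLike.exists_of_lt (lt_top_iff_ne_top.2 h₂)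
  by_cases ha₂ : a ∈ A₂
  · by_cases hb₁ : b ∈ A₁
    · exact ⟨a + b, fun h => ha (by simpa using A₁.sub_mem h hb₁),
        fun h => hb (by simpa using A₂.sub_mem h ha₂)⟩
    · exact ⟨b, hb₁, hb⟩
  · exact ⟨a, ha, ha₂⟩

theorem span_compl_union_eq_top_of_two_lt_card [Fintype F] (hF : 2 < Fintype.card F)
    {A₁ A₂ : Submodule F E} (h₁ : A₁ ≠ ⊤) (h₂ : A₂ ≠ ⊤) : span F ((A₁ : Set E) ∪ A₂)ᶜ = ⊤ := by
  classical
  obtain ⟨x, hx₁, hx₂⟩ := exists_notMem_of_ne_top_of_ne_top h₁ h₂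
  have hx : x ∈ span F ((A₁ : Set E) ∪ A₂)ᶜ := subset_span (by simp [hx₁, hx₂])
  -- Each `Aᵢ` meets a line `y + F • x` at most once, and the line has `q ≥ 3` points.
  have hline : ∀ A : Submodule F E, x ∉ A →
      ∀ y {c d : F}, y + c • x ∈ A → y + d • x ∈ A → c = d := by
    intro A hxA y c d hc hd
    by_contra hcd
    have := A.sub_mem hc hd
    rw [add_sub_add_left_eq_sub, ← sub_smul] at this
    exact hxA ((A.smul_mem_iff (sub_ne_zero.2 hcd)).1 this)
  refine eq_top_iff'.2 fun y => ?_
  by_contra hy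
  have hmem : ∀ c : F, y + c • x ∈ A₁ ∨ y + c • x ∈ A₂ := fun c => by
    by_contra! h
    have hyc : y + c • x ∈ span F ((A₁ : Set E) ∪ A₂)ᶜ := subset_span (by simp [h.1, h.2])
    exact hy (by simpa using sub_mem hyc (smul_mem _ c hx))
  obtain ⟨c, d, hcd, hA₁⟩ := Fintype.exists_ne_map_eq_of_card_lt
    (fun c : F => decide (y + c • x ∈ A₁)) (by simpa using hF)
  by_cases hc : y + c • x ∈ A₁
  · exact hcd (hline A₁ hx₁ y hc (by simpa [hc] using hA₁))
  · have hd : y + d • x ∉ A₁ := by simpa [hc] using hA₁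
    exact hcd (hline A₂ hx₂ y ((hmem c).resolve_left hc) ((hmem d).resolve_left hd))

theorem exists_mem_ne_zero_add_ne_zero {P : Submodule F E} (hP : 2 ≤ finrank F P) {p : E}
    (hp : p ∈ P) : ∃ p' ∈ P, p' ≠ 0 ∧ p + p' ≠ 0 := by
  have hlt : F ∙ p < P := by
    refine lt_of_le_of_finrank_lt_finrank ((span_singleton_le_iff_mem _ _).2 hp) ?_
    have := finrank_span_le_card (R := F) ({p} : Set E)
    simp only [Set.toFinset_singleton, Finset.card_singleton] at this
    omega
  obtain ⟨p', hp', hp'p⟩ := SetLike.exists_of_lt hlt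
  refine ⟨p', hp', fun h => hp'p (h ▸ zero_mem _), fun h => hp'p ?_⟩
  rw [eq_neg_of_add_eq_zero_right h]
  exact neg_mem (mem_span_singleton_self p)

theorem span_compl_union_eq_top_of_isCompl {P Q : Submodule F E} (hPQ : IsCompl P Q)
    (hP : 2 ≤ finrank F P) (hQ : Q ≠ ⊥) : span F ((P : Set E) ∪ Q)ᶜ = ⊤ := by
  set T := span F ((P : Set E) ∪ Q)ᶜ
  have hsum : ∀ p ∈ P, ∀ q ∈ Q, p ≠ 0 → q ≠ 0 → p + q ∈ T := by
    intro p hp q hq hp0 hq0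
    refine subset_span ?_
    simp only [Set.mem_compl_iff, Set.mem_union, SetLike.mem_coe, not_or]
    exact ⟨fun h => hq0 (disjoint_def.1 hPQ.disjoint q (by simpa using P.sub_mem h hp) hq),
      fun h => hp0 (disjoint_def.1 hPQ.disjoint p hp (by simpa using Q.sub_mem h hq))⟩
  obtain ⟨q₀, hq₀, hq₀0⟩ := exists_mem_ne_zero_of_ne_bot hQ
  have hPT : P ≤ T := by
    intro p hp
    obtain ⟨p', hp', hp'0, hpp'0⟩ := exists_mem_ne_zero_add_ne_zero hP hp
    have := T.sub_mem (hsum _ (P.add_mem hp hp') q₀ hq₀ hpp'0 hq₀0)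
      (hsum p' hp' q₀ hq₀ hp'0 hq₀0)
    rwa [add_sub_add_right_eq_sub, add_sub_cancel_right] at this
  obtain ⟨p₀, hp₀, hp₀0, -⟩ := exists_mem_ne_zero_add_ne_zero hP P.zero_mem
  have hQT : Q ≤ T := by
    intro q hq
    by_cases hq0 : q = 0
    · simp [hq0]
    have := T.sub_mem (hsum p₀ hp₀ q hq hp₀0 hq0) (hPT hp₀)
    rwa [add_sub_cancel_left] at this
  rw [eq_top_iff, ← hPQ.sup_eq_top]
  exact sup_le hPT hQT

end Submodule

theorem vectorSpan_eq_span_of_add_mem {F E : Type*} [Field F] [AddCommGroup E] [Module F E]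
    {s : Set E} {a b : E} (ha : a ∈ s) (hb : b ∈ s) (hab : a + b ∈ s) :
    vectorSpan F s = span F s := by
  refine le_antisymm ?_ (span_le.2 fun x hx => ?_)
  · rw [vectorSpan_def, span_le]
    rintro _ ⟨x, hx, y, hy, rfl⟩
    exact sub_mem (subset_span hx) (subset_span hy)
  · have hxa : x - a ∈ vectorSpan F s := vsub_mem_vectorSpan F hx ha
    have ha' : (a + b) - b ∈ vectorSpan F s := vsub_mem_vectorSpan F hab hb
    rw [add_sub_cancel_right] at ha'
    simpa using add_mem hxa ha'

section Twist

variable {F E : Type*} [Field F] [AddCommGroup E] [Module F E]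

structure IsTwist (A : Submodule F E) (σ : E → E) : Prop where
  bijective : Function.Bijective σ
  map_smul : ∀ (a : F) (x : E), σ (a • x) = a • σ x
  span_fixedPoints : span F (Function.fixedPoints σ) = ⊤
  span_range_sub : span F (Set.range fun x => σ x - x) = A

theorem IsTwist.apply_eq_iff {V : Type*} [AddCommGroup V] [Module F V] {W : Submodule F V}
    {σ : Dual F V → Dual F V} (hσ : IsTwist W.dualAnnihilator σ) {u v : V} :
    (∀ f, f u = σ f v) ↔ u ∈ W ∧ u = v := by
  constructor
  · intro h
    obtain rfl : u = v := Dual.eq_of_span_eq_top_of_apply_eq hσ.span_fixedPoints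
      fun f hf => by rw [h f, Function.mem_fixedPoints.1 hf]
    refine ⟨(Subspace.forall_mem_dualAnnihilator_apply_eq_zero_iff W u).1 fun g hg => ?_, rfl⟩
    rw [← hσ.span_range_sub] at hg
    refine Dual.apply_eq_zero_of_mem_span ?_ hg
    rintro _ ⟨f, rfl⟩
    simp [h f]
  · rintro ⟨hu, rfl⟩ f
    have hf : σ f - f ∈ W.dualAnnihilator := hσ.span_range_sub ▸ subset_span ⟨f, rfl⟩
    have hfu := (mem_dualAnnihilator _).1 hf u hu
    rw [LinearMap.sub_apply, sub_eq_zero] at hfu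
    exact hfu.symm

open Classical in
noncomputable def smulOn (S : Set E) (c : F) (x : E) : E :=
  if x ∈ S then c • x else x

theorem smulOn_smulOn {S : Set E} (hS : ∀ (a : F), ∀ x ∈ S, a • x ∈ S) (c d : F) (x : E) :
    smulOn S c (smulOn S d x) = smulOn S (c * d) x := by
  by_cases hx : x ∈ S
  · have hdx : d • x ∈ S := hS d x hx
    simp [smulOn, hx, hdx, mul_smul]
  · simp [smulOn, hx]

theorem isTwist_smulOn {S : Set E} (hS : ∀ (a : F), ∀ x ∈ S, a • x ∈ S) {μ : F} (hμ0 : μ ≠ 0)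
    (hμ1 : μ ≠ 1) (hspan : span F Sᶜ = ⊤) : IsTwist (span F S) (smulOn S μ) := by
  classical
  have hmem : ∀ (a : F) (x : E), a ≠ 0 → (a • x ∈ S ↔ x ∈ S) := fun a x ha =>
    ⟨fun h => by simpa [smul_smul, ha] using hS a⁻¹ _ h, hS _ x⟩
  have hid : smulOn S (1 : F) = id := funext fun x => by simp [smulOn]
  refine ⟨Function.bijective_iff_has_inverse.2 ⟨smulOn S μ⁻¹, fun x => ?_, fun x => ?_⟩,
    fun a x => ?_, top_unique (hspan ▸ span_mono fun x hx => ?_), le_antisymm ?_ ?_⟩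
  · rw [smulOn_smulOn hS, inv_mul_cancel₀ hμ0, hid, id]
  · rw [smulOn_smulOn hS, mul_inv_cancel₀ hμ0, hid, id]
  · by_cases ha : a = 0
    · simp [smulOn, ha]
    by_cases hx : x ∈ S
    · simp [smulOn, hx, hmem a x ha, smul_comm a μ]
    · simp [smulOn, hx, hmem a x ha]
  · simp [Function.mem_fixedPoints, Function.IsFixedPt, smulOn, Set.notMem_of_mem_compl hx]
  · refine span_le.2 ?_
    rintro _ ⟨x, rfl⟩
    by_cases hx : x ∈ S
    · simpa [smulOn, hx, sub_smul] using smul_mem _ (μ - 1) (subset_span hx)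
    · simp [smulOn, hx]
  · refine span_le.2 fun x hx => ?_
    have hdiff : smulOn S μ x - x ∈ span F (Set.range fun x => smulOn S μ x - x) :=
      subset_span ⟨x, rfl⟩
    have hx' : (μ - 1)⁻¹ • (smulOn S μ x - x) = x := by
      have hμx : μ • x - x = (μ - 1) • x := by rw [sub_smul, one_smul]
      rw [smulOn, if_pos hx, hμx, smul_smul, inv_mul_cancel₀ (sub_ne_zero.2 hμ1), one_smul]
    exact hx' ▸ smul_mem _ _ hdiff

theorem pow_apply_sub_mem_span_range (σ : Equiv.Perm E) (x : E) (j : ℕ) :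
    (σ ^ j) x - x ∈ span F (Set.range fun x => σ x - x) := by
  induction j with
  | zero => simp
  | succ j ih =>
    have hstep : σ ((σ ^ j) x) - (σ ^ j) x ∈ span F (Set.range fun x => σ x - x) :=
      subset_span ⟨_, rfl⟩
    simpa [pow_succ', sub_add_sub_cancel] using add_mem hstep ih

theorem eq_zero_or_eq_one_of_card_eq_two [Fintype F] (hF : Fintype.card F = 2) (a : F) :
    a = 0 ∨ a = 1 := by
  classical
  refine or_iff_not_imp_left.2 fun ha => ?_
  have : Subsingleton Fˣ := Fintype.card_le_one_iff_subsingleton.1 (by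
    rw [Fintype.card_units, hF])
  simpa using congrArg Units.val (Subsingleton.elim (Units.mk0 a ha) 1)

theorem isTwist_of_isCycleOn [Fintype F] (hF : Fintype.card F = 2) {s : Finset E}
    {σ : Equiv.Perm E} (hσ : σ.IsCycleOn s) (hσs : ∀ x ∉ s, σ x = x) (hs0 : (0 : E) ∉ s)
    (hspan : span F (s : Set E)ᶜ = ⊤) : IsTwist (vectorSpan F (s : Set E)) σ := by
  refine ⟨σ.bijective, fun a x => ?_, top_unique (hspan ▸ span_mono fun x hx => hσs x hx),
    le_antisymm (span_le.2 ?_) ?_⟩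
  · rcases eq_zero_or_eq_one_of_card_eq_two hF a with rfl | rfl
    · simpa using hσs 0 hs0
    · simp
  · rintro _ ⟨x, rfl⟩
    by_cases hx : x ∈ s
    · exact vsub_mem_vectorSpan F (hσ.apply_mem_iff.2 hx) hx
    · simp [hσs x hx]
  · rw [vectorSpan_def, span_le]
    rintro _ ⟨x, hx, y, hy, rfl⟩
    obtain ⟨j, -, rfl⟩ := hσ.exists_pow_eq hy hx
    exact pow_apply_sub_mem_span_range σ y j

end Twist

section Existence

variable {F E : Type*} [Field F] [Fintype F] [AddCommGroup E] [Module F E]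

theorem exists_isTwist_sup_of_two_lt_card (hF : 2 < Fintype.card F) {A₁ A₂ : Submodule F E}
    (h₁ : A₁ ≠ ⊤) (h₂ : A₂ ≠ ⊤) : ∃ σ, IsTwist (A₁ ⊔ A₂) σ := by
  classical
  obtain ⟨μ, -, hμ⟩ := Finset.exists_mem_notMem_of_card_lt_card
    (s := {0, 1}) (t := Finset.univ) ((Finset.card_le_two).trans_lt hF)
  simp only [Finset.mem_insert, Finset.mem_singleton, not_or] at hμ
  have hS : ∀ (a : F), ∀ x ∈ (A₁ : Set E) ∪ A₂, a • x ∈ (A₁ : Set E) ∪ A₂ := by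
    rintro a x (hx | hx)
    exacts [Or.inl (A₁.smul_mem a hx), Or.inr (A₂.smul_mem a hx)]
  have := isTwist_smulOn hS hμ.1 hμ.2 (span_compl_union_eq_top_of_two_lt_card hF h₁ h₂)
  rw [span_union, span_eq, span_eq] at this
  exact ⟨_, this⟩

theorem exists_isTwist_sup_of_card_eq_two [Finite E] (hF : Fintype.card F = 2)
    {A₁ A₂ : Submodule F E} (h₁ : 2 ≤ finrank F A₁)
    (hspan : span F ((A₁ : Set E) ∪ A₂)ᶜ = ⊤) : ∃ σ, IsTwist (A₁ ⊔ A₂) σ := by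
  classical
  have := Fintype.ofFinite E
  set s : Finset E := (((A₁ : Set E) ∪ A₂) \ {0}).toFinset
  have hs : (s : Set E) = ((A₁ : Set E) ∪ A₂) \ {0} := Set.coe_toFinset _
  obtain ⟨σ, hσ, hσs⟩ := s.exists_cycleOn
  obtain ⟨a, ha, ha0, -⟩ := exists_mem_ne_zero_add_ne_zero h₁ A₁.zero_mem
  obtain ⟨b, hb, hb0, hab0⟩ := exists_mem_ne_zero_add_ne_zero h₁ ha
  have hmem : ∀ x ∈ A₁, x ≠ 0 → x ∈ (s : Set E) := fun x hx hx0 => by simp [hs, hx, hx0]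
  have := isTwist_of_isCycleOn hF hσ
    (fun x hx => Equiv.Perm.notMem_support.1 fun h => hx (hσs h)) (by simp [s])
    (top_unique (hspan ▸ span_mono (Set.compl_subset_compl.2 (hs ▸ Set.sdiff_subset))))
  rw [vectorSpan_eq_span_of_add_mem (hmem a ha ha0) (hmem b hb hb0)
    (hmem _ (A₁.add_mem ha hb) hab0), hs, span_sdiff_singleton_zero, span_union, span_eq,
    span_eq] at this
  exact ⟨σ, this⟩

theorem exists_isTwist_of_finrank_eq_one [FiniteDimensional F E] (hF : Fintype.card F = 2)
    {A : Submodule F E} (hA : finrank F A = 1) (hE : 3 ≤ finrank F E) : ∃ σ, IsTwist A σ := by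
  classical
  obtain ⟨g, hgA, hg0⟩ := exists_mem_ne_zero_of_ne_bot
    (fun h => by rw [h, finrank_bot] at hA; omega : A ≠ ⊥)
  have hAg : F ∙ g = A := eq_of_le_of_finrank_le ((span_singleton_le_iff_mem _ _).2 hgA)
    (by rw [hA, finrank_span_singleton hg0])
  obtain ⟨f, -, hf⟩ := SetLike.exists_of_lt (lt_top_iff_ne_top.2
    (fun h => by rw [h, finrank_top] at hA; omega : A ≠ ⊤))
  have hU : span F {f, g} ≠ ⊤ := fun h => by
    have := finrank_span_le_card (R := F) ({f, g} : Set E)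
    rw [h, finrank_top, Set.toFinset_insert, Set.toFinset_singleton] at this
    have := this.trans Finset.card_le_two
    omega
  have hfg : f ≠ f + g := by simpa using hg0
  have hs : ((({f, f + g} : Finset E)) : Set E) ⊆ span F {f, g} := by
    simp only [Finset.coe_insert, Finset.coe_singleton, Set.insert_subset_iff,
      Set.singleton_subset_iff, SetLike.mem_coe]
    exact ⟨subset_span (by simp), add_mem (subset_span (by simp)) (subset_span (by simp))⟩
  have := isTwist_of_isCycleOn (s := {f, f + g}) hF
    (by simpa using Equiv.Perm.isCycleOn_swap hfg)
    (fun x hx => Equiv.swap_apply_of_ne_of_ne (by simp_all) (by simp_all))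
    (by
      simp only [Finset.mem_insert, Finset.mem_singleton, not_or]
      exact ⟨fun h => hf (h ▸ A.zero_mem), fun h => hf (by
        rw [eq_neg_of_add_eq_zero_left h.symm]; exact neg_mem hgA)⟩)
    (top_unique ((span_compl_eq_top hU) ▸ span_mono (Set.compl_subset_compl.2 hs)))
  rw [Finset.coe_insert, Finset.coe_singleton, vectorSpan_pair, vsub_eq_sub, sub_add_cancel_left,
    ← Set.neg_singleton, span_neg, hAg] at this
  exact ⟨_, this⟩

theorem exists_isTwist [FiniteDimensional F E] {A : Submodule F E} (hA : A ≠ ⊥)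
    (hE : 2 ≤ finrank F E) (hFE : ¬(Fintype.card F = 2 ∧ finrank F E = 2)) :
    ∃ σ, IsTwist A σ := by
  have := Module.finite_of_finite F (M := E)
  have := Module.nontrivial_of_finrank_pos (R := F) (M := E) (by omega)
  obtain ⟨x, hx⟩ := exists_ne (0 : E)
  obtain ⟨P, hP⟩ := (F ∙ x).exists_isCompl
  have hPrank : finrank F P + 1 = finrank F E := by
    rw [← finrank_span_singleton (K := F) hx, add_comm]
    exact finrank_add_eq_of_isCompl hP
  have hline : F ∙ x ≠ ⊤ := fun h => by
    have := finrank_span_singleton (K := F) hx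
    rw [h, finrank_top] at this
    omega
  have hP_ne_top : P ≠ ⊤ := fun h => by rw [h, finrank_top] at hPrank; omega
  have hsup : P ⊔ (F ∙ x) = ⊤ := hP.symm.sup_eq_top
  rcases Nat.lt_or_eq_of_le (Fintype.one_lt_card (α := F)) with hF | hF
  · by_cases hAtop : A = ⊤
    · exact hAtop ▸ hsup ▸ exists_isTwist_sup_of_two_lt_card hF hP_ne_top hline
    · exact sup_idem A ▸ exists_isTwist_sup_of_two_lt_card hF hAtop hAtop
  · have hAne : finrank F A ≠ 0 := fun h => hA (finrank_eq_zero.1 h)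
    by_cases hA1 : finrank F A = 1
    · refine exists_isTwist_of_finrank_eq_one hF.symm hA1 ?_
      have := A.finrank_le
      omega
    by_cases hAtop : A = ⊤
    · refine hAtop ▸ hsup ▸ exists_isTwist_sup_of_card_eq_two hF.symm (by omega)
        (span_compl_union_eq_top_of_isCompl hP.symm ?_ ?_)
      · omega
      · simpa using hx
    · refine sup_idem A ▸ exists_isTwist_sup_of_card_eq_two hF.symm (by omega) ?_
      rw [Set.union_self]
      exact span_compl_eq_top hAtop

end Existence

section Code

variable {F : Type*} [Field F] {n k : ℕ} {C : Submodule F (Fin n → F)}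

def coordFn (C : Submodule F (Fin n → F)) (i : Fin n) : Dual F C :=
  (LinearMap.proj i).comp C.subtype

@[simp]
theorem coordFn_apply (i : Fin n) (c : C) : coordFn C i c = (c : Fin n → F) i := rfl

theorem IsSimplexCode.coordFn_ne_zero (hC : IsSimplexCode k C) (i : Fin n) :
    coordFn C i ≠ 0 := by
  obtain ⟨c, hc, hci⟩ := hC.2.1 i
  exact fun h => hci (by simpa using LinearMap.congr_fun h ⟨c, hc⟩)

theorem IsSimplexCode.coordFn_ne_smul (hC : IsSimplexCode k C) {i j : Fin n} (hij : i ≠ j)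
    (a : F) : coordFn C j ≠ a • coordFn C i := by
  obtain ⟨c, hc, hne⟩ := hC.2.2 i j hij a
  exact fun h => hne (by simpa using LinearMap.congr_fun h ⟨c, hc⟩)

/-- The `n (q - 1)` multiples `a • coordFn C i`, `a ≠ 0`, are pairwise distinct, and there are
exactly `q ^ k - 1` nonzero functionals on `C`. -/
theorem IsSimplexCode.exists_eq_smul_coordFn [Fintype F] (hC : IsSimplexCode k C)
    (hn : n * (Fintype.card F - 1) = Fintype.card F ^ k - 1) {f : Dual F C} (hf : f ≠ 0) :
    ∃ i, ∃ a : F, f = a • coordFn C i := by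
  classical
  have := Module.finite_of_finite F (M := Dual F C)
  let Ψ : Fin n × Fˣ → {g : Dual F C // g ≠ 0} := fun p =>
    ⟨(p.2 : F) • coordFn C p.1, smul_ne_zero p.2.ne_zero (hC.coordFn_ne_zero p.1)⟩
  have hΨ : Function.Injective Ψ := by
    rintro ⟨i, a⟩ ⟨j, b⟩ h
    have h' : (a : F) • coordFn C i = (b : F) • coordFn C j := congrArg Subtype.val h
    obtain rfl : i = j := by
      by_contra hij
      refine hC.coordFn_ne_smul hij ((b : F)⁻¹ * a) ?_
      rw [mul_smul, h', smul_smul, inv_mul_cancel₀ b.ne_zero, one_smul]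
    simpa [Units.ext_iff] using smul_left_injective F (hC.coordFn_ne_zero i) h'
  have hcard : Nat.card {g : Dual F C // g ≠ 0} = Nat.card (Fin n × Fˣ) := by
    have := Fintype.ofFinite (Dual F C)
    rw [Nat.card_eq_fintype_card, Nat.card_eq_fintype_card, Fintype.card_subtype_compl,
      Fintype.card_subtype_eq, Fintype.card_prod, Fintype.card_fin, Fintype.card_units, hn,
      card_eq_pow_finrank (K := F), Subspace.dual_finrank_eq, hC.1]
  obtain ⟨⟨i, a⟩, hia⟩ := (hΨ.bijective_of_nat_card_le hcard.le).2 ⟨f, hf⟩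
  exact ⟨i, a, (congrArg Subtype.val hia).symm⟩

theorem IsSimplexCode.apply_eq_of_forall_coordFn [Fintype F] (hC : IsSimplexCode k C)
    (hn : n * (Fintype.card F - 1) = Fintype.card F ^ k - 1) {σ : Dual F C → Dual F C}
    (hσ : ∀ (a : F) f, σ (a • f) = a • σ f) {u v : C}
    (h : ∀ i, (u : Fin n → F) i = σ (coordFn C i) v) (f : Dual F C) : f u = σ f v := by
  by_cases hf : f = 0
  · simpa [hf] using (congrArg (· v) (hσ 0 0)).symm
  obtain ⟨i, a, rfl⟩ := hC.exists_eq_smul_coordFn hn hf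
  simp [hσ, h i]

def twistCode (C : Submodule F (Fin n → F)) (σ : Dual F C → Dual F C) :
    Submodule F (Fin n → F) :=
  LinearMap.range (LinearMap.pi fun i => σ (coordFn C i))

theorem mem_twistCode {σ : Dual F C → Dual F C} {c : Fin n → F} :
    c ∈ twistCode C σ ↔ ∃ v : C, ∀ i, c i = σ (coordFn C i) v := by
  simp [twistCode, funext_iff, eq_comm]

theorem IsSimplexCode.inf_twistCode [Fintype F] (hC : IsSimplexCode k C)
    (hn : n * (Fintype.card F - 1) = Fintype.card F ^ k - 1) {W : Submodule F C}
    {σ : Dual F C → Dual F C} (hσ : IsTwist W.dualAnnihilator σ) :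
    C ⊓ twistCode C σ = W.map C.subtype := by
  ext c
  simp only [mem_inf, mem_twistCode, mem_map, subtype_apply]
  constructor
  · rintro ⟨hc, v, hv⟩
    have := hσ.apply_eq_iff.1 (hC.apply_eq_of_forall_coordFn hn hσ.map_smul (u := ⟨c, hc⟩) hv)
    exact ⟨_, this.1, rfl⟩
  · rintro ⟨u, hu, rfl⟩
    exact ⟨u.2, u, fun i => hσ.apply_eq_iff.2 ⟨hu, rfl⟩ (coordFn C i)⟩

theorem IsSimplexCode.twistCode [Fintype F] (hC : IsSimplexCode k C)
    (hn : n * (Fintype.card F - 1) = Fintype.card F ^ k - 1) {σ : Dual F C → Dual F C}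
    (hσ : Function.Bijective σ) (hσ_smul : ∀ (a : F) f, σ (a • f) = a • σ f) :
    IsSimplexCode k (twistCode C σ) := by
  have hσ0 : σ 0 = 0 := by simpa using hσ_smul 0 0
  have hinj : Function.Injective (LinearMap.pi fun i => σ (coordFn C i)) := by
    rw [← LinearMap.ker_eq_bot, eq_bot_iff]
    intro v hv
    have hv0 : ∀ f, f 0 = σ f v := hC.apply_eq_of_forall_coordFn hn hσ_smul fun i => by
      simpa using (congrFun hv i).symm
    refine (forall_dual_apply_eq_zero_iff F v).1 fun g => ?_
    obtain ⟨f, rfl⟩ := hσ.2 g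
    simpa using (hv0 f).symm
  refine ⟨by rw [_root_.twistCode, LinearMap.finrank_range_of_inj hinj, hC.1], fun i => ?_,
    fun i j hij a => ?_⟩
  · have hσi : σ (coordFn C i) ≠ 0 := fun h => hC.coordFn_ne_zero i (hσ.1 (h.trans hσ0.symm))
    obtain ⟨v, hv⟩ := DFunLike.ne_iff.1 hσi
    exact ⟨_, LinearMap.mem_range_self _ v, hv⟩
  · by_contra! h
    refine hC.coordFn_ne_smul hij a (hσ.1 ?_)
    rw [hσ_smul]
    ext v
    simpa using h _ (LinearMap.mem_range_self _ v)

end Code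

theorem exists_two_simplex_codes_meeting_in_subcode {F : Type*} [Field F] [Fintype F]
    {q n k m : ℕ} (hq : Fintype.card F = q) (hk : 2 ≤ k)
    (hn : n * (q - 1) = q ^ k - 1) (hqk : ¬(q = 2 ∧ k = 2)) (hmk : m ≤ k - 1)
    (X : Submodule F (Fin n → F)) (hm : Module.finrank F ↥X = m)
    (hsub : ∃ C₀ : Submodule F (Fin n → F), IsSimplexCode k C₀ ∧ X ≤ C₀) :
    ∃ C C' : Submodule F (Fin n → F),
      IsSimplexCode k C ∧ IsSimplexCode k C' ∧ C ≠ C' ∧ C ⊓ C' = X := by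
  subst hq
  obtain ⟨C₀, hC₀, hXC⟩ := hsub
  set W : Submodule F C₀ := X.comap C₀.subtype
  have hWX : W.map C₀.subtype = X := by rw [map_comap_subtype, inf_of_le_right hXC]
  have hdual : finrank F (Dual F C₀) = k := by rw [Subspace.dual_finrank_eq, hC₀.1]
  have hA : W.dualAnnihilator ≠ ⊥ := fun h => by
    rw [dualAnnihilator_eq_bot_iff] at h
    rw [← hWX, finrank_map_subtype_eq, h, finrank_top, hC₀.1] at hm
    omega
  obtain ⟨σ, hσ⟩ := exists_isTwist hA (hdual ▸ hk) (hdual ▸ hqk)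
  have hinf := hC₀.inf_twistCode hn hσ
  refine ⟨C₀, twistCode C₀ σ, hC₀, hC₀.twistCode hn hσ.bijective hσ.map_smul, fun h => ?_,
    hinf.trans hWX⟩
  rw [← h, inf_idem, hWX] at hinf
  rw [← hinf, hC₀.1] at hm
  omega
end

section
/- The graph Γ^s(k,q), whose vertices are q-ary simplex codes of dimension k in F_q^n (n = (q^k-1)/(q-1)) with two codes adjacent when their intersection has dimension k-1, is connected. -/
open Module Submodule

/-- The graph of simplex codes: vertices are `q`-ary simplex codes of dimension `k`,
adjacent when their intersection is `(k-1)`-dimensional. -/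
def simplexGraph (F : Type*) [Field F] (n k : ℕ) :
    SimpleGraph {C : Submodule F (Fin n → F) // IsSimplexCode k C} where
  Adj C C' := C ≠ C' ∧ Module.finrank F ↥(C.1 ⊓ C'.1) = k - 1
  symm := by
    constructor
    intro C C' h
    exact ⟨h.1.symm, by rw [inf_comm]; exact h.2⟩
  loopless := by
    constructor
    intro C h
    exact h.1 rfl

/-!
Parametrize a `k`-dimensional code by an injective linear map `F^k → F^n`, i.e. by the tuple of
its coordinate functionals `f i ∈ (F^k)*`; the code is simplex exactly when the points `[f i]`
of `ℙ((F^k)*)` are distinct. As `n = |ℙ((F^k)*)|`, the tuples of any two simplex codes differ by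
a permutation and a rescaling of the coordinates. Swapping coordinates `i ≠ j` (rescaling
coordinate `i`) leaves the parametrization unchanged on the hyperplane `ker (f i - f j)`
(`ker (f i)`), so the new code shares a `(k - 1)`-dimensional subspace with the old one and is
equal or adjacent to it.
-/

open Function Projectivization
open scoped LinearAlgebra.Projectivization

section

variable {F V W ι : Type*} [Field F] [AddCommGroup V] [Module F V] [AddCommGroup W]
  [Module F W]

theorem LinearMap.pred_finrank_le_finrank_inf_range [FiniteDimensional F V]
    [FiniteDimensional F W] {φ ψ : V →ₗ[F] W} (hφ : Injective φ) {h : Dual F V}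
    (hh : h ≠ 0) (heq : Set.EqOn φ ψ (LinearMap.ker h)) :
    finrank F V - 1 ≤ finrank F ↥(LinearMap.range φ ⊓ LinearMap.range ψ) := by
  have hmap : (LinearMap.ker h).map φ ≤ LinearMap.range φ ⊓ LinearMap.range ψ := by
    rintro _ ⟨v, hv, rfl⟩
    exact ⟨LinearMap.mem_range_self φ v, heq hv ▸ LinearMap.mem_range_self ψ v⟩
  calc finrank F V - 1 = finrank F (LinearMap.ker h) := by
        rw [← h.finrank_ker_add_one_of_ne_zero hh, Nat.add_sub_cancel]
    _ = finrank F ((LinearMap.ker h).map φ) :=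
        LinearEquiv.finrank_eq (Submodule.equivMapOfInjective φ hφ _)
    _ ≤ _ := Submodule.finrank_mono hmap

theorem simplexGraph.reachable_of_pred_le_finrank_inf {n k : ℕ}
    (C C' : {C : Submodule F (Fin n → F) // IsSimplexCode k C})
    (h : k - 1 ≤ finrank F ↥(C.1 ⊓ C'.1)) : (simplexGraph F n k).Reachable C C' := by
  by_cases hCC : C = C'
  · exact hCC ▸ .refl C
  refine SimpleGraph.Adj.reachable ⟨hCC, le_antisymm ?_ h⟩
  have hne : C.1 ⊓ C'.1 ≠ C.1 := fun hinf => hCC <| Subtype.ext <|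
    eq_of_le_of_finrank_eq (hinf ▸ inf_le_right) (C.2.1.trans C'.2.1.symm)
  have hlt := Submodule.finrank_lt_finrank_of_lt (lt_of_le_of_ne inf_le_left hne)
  have hC := C.2.1
  omega

def codeOf (f : ι → Dual F V) : Submodule F (ι → F) := LinearMap.range (LinearMap.pi f)

/-- In coding-theory terms, the points `[f i]` form a projective system: they are distinct and
lie on no common hyperplane of `ℙ(V*)`. -/
structure IsProjectiveSystem (f : ι → Dual F V) : Prop where
  injective_pi : Injective (LinearMap.pi f)
  ne_zero : ∀ i, f i ≠ 0
  ne_smul : ∀ i j, i ≠ j → ∀ a : F, f j ≠ a • f i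

theorem isSimplexCode_codeOf_iff [FiniteDimensional F V] {n : ℕ} {f : Fin n → Dual F V}
    (hf : Injective (LinearMap.pi f)) :
    IsSimplexCode (finrank F V) (codeOf f) ↔
      (∀ i, f i ≠ 0) ∧ ∀ i j, i ≠ j → ∀ a : F, f j ≠ a • f i := by
  rw [IsSimplexCode, codeOf, LinearMap.finrank_range_of_inj hf]
  simp [DFunLike.ne_iff]

namespace IsProjectiveSystem

variable {f : ι → Dual F V}

theorem comp_perm (hf : IsProjectiveSystem f) (σ : Equiv.Perm ι) :
    IsProjectiveSystem (f ∘ σ) where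
  injective_pi v w hvw := hf.injective_pi <| funext fun i => by
    simpa using congrFun hvw (σ.symm i)
  ne_zero i := hf.ne_zero (σ i)
  ne_smul i j hij := hf.ne_smul (σ i) (σ j) (σ.injective.ne hij)

theorem smul (hf : IsProjectiveSystem f) (c : ι → Fˣ) : IsProjectiveSystem (c • f) where
  injective_pi v w hvw := hf.injective_pi <| funext fun i => by
    have h := congrFun hvw i
    rw [LinearMap.pi_apply, LinearMap.pi_apply, Pi.smul_apply', LinearMap.smul_apply,
      LinearMap.smul_apply] at h
    exact smul_left_cancel _ h
  ne_zero i := (smul_ne_zero_iff_ne (c i)).2 (hf.ne_zero i)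
  ne_smul i j hij a h := hf.ne_smul i j hij ((c j)⁻¹ * a * c i) <| by
    simp only [Pi.smul_apply', Units.smul_def] at h
    rw [mul_smul, mul_smul, ← h, smul_smul, Units.inv_mul, one_smul]

theorem injective_mk (hf : IsProjectiveSystem f) :
    Injective fun i => Projectivization.mk F (f i) (hf.ne_zero i) := by
  intro i j hij
  by_contra hne
  obtain ⟨a, ha⟩ := (mk_eq_mk_iff' F _ _ _ _).1 hij
  exact hf.ne_smul j i (Ne.symm hne) a ha.symm

theorem exists_eq_smul_comp_perm [Finite F] [FiniteDimensional F V]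
    (hcard : Nat.card (ℙ F (Dual F V)) = Nat.card ι) {g : ι → Dual F V}
    (hf : IsProjectiveSystem f) (hg : IsProjectiveSystem g) :
    ∃ (σ : Equiv.Perm ι) (c : ι → Fˣ), g = c • (f ∘ σ) := by
  have := Module.finite_of_finite F (M := Dual F V)
  let ef := Equiv.ofBijective _ (hf.injective_mk.bijective_of_nat_card_le hcard.le)
  let eg := Equiv.ofBijective _ (hg.injective_mk.bijective_of_nat_card_le hcard.le)
  choose c hc using fun i => (mk_eq_mk_iff F _ _ _ _).1 (ef.apply_symm_apply (eg i)).symm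
  exact ⟨eg.trans ef.symm, c, funext fun i => (hc i).symm⟩

end IsProjectiveSystem

theorem exists_isProjectiveSystem [Finite ι] [Finite F] [FiniteDimensional F V]
    (hcard : Nat.card (ℙ F (Dual F V)) = Nat.card ι) :
    ∃ f : ι → Dual F V, IsProjectiveSystem f := by
  have := Module.finite_of_finite F (M := Dual F V)
  obtain ⟨e⟩ := Finite.card_eq.1 hcard
  refine ⟨fun i => (e.symm i).rep, ⟨?_, fun i => rep_nonzero _, ?_⟩⟩
  · refine (injective_iff_map_eq_zero _).2 fun v hv => ?_
    refine (forall_dual_apply_eq_zero_iff F v).1 fun φ => ?_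
    obtain rfl | hφ := eq_or_ne φ 0
    · rfl
    -- every nonzero functional is a multiple of one of the representatives
    obtain ⟨a, ha⟩ := (mk_eq_mk_iff' F _ _ hφ (rep_nonzero _)).1 (mk_rep (mk F φ hφ)).symm
    have hrep : (mk F φ hφ).rep v = 0 := by simpa using congrFun hv (e (mk F φ hφ))
    rw [← ha, LinearMap.smul_apply, hrep, smul_zero]
  · intro i j hij a h
    have ha : a ≠ 0 := by
      rintro rfl
      exact rep_nonzero _ (h.trans (zero_smul F _))
    refine hij (e.symm.injective ?_)
    rw [← mk_rep (e.symm i), ← mk_rep (e.symm j)]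
    exact (mk_eq_mk_iff' F _ _ _ _).2
      ⟨a⁻¹, by rw [h, smul_smul, inv_mul_cancel₀ ha, one_smul]⟩

theorem natCard_projectivization_eq [Finite F] [FiniteDimensional F V] {n : ℕ}
    (hn : n * (Nat.card F - 1) = Nat.card F ^ finrank F V - 1) : Nat.card (ℙ F V) = n := by
  have hq : 1 < Nat.card F := Finite.one_lt_card
  refine Nat.eq_of_mul_eq_mul_right (m := Nat.card F - 1) (by omega) ?_
  rw [← Projectivization.card, Module.natCard_eq_pow_finrank (K := F), hn]

namespace IsProjectiveSystem

variable {n k : ℕ} {f g : Fin n → Dual F (Fin k → F)}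

def toVertex (hf : IsProjectiveSystem f) : {C : Submodule F (Fin n → F) // IsSimplexCode k C} :=
  ⟨codeOf f, by
    simpa using (isSimplexCode_codeOf_iff hf.injective_pi).2 ⟨hf.ne_zero, hf.ne_smul⟩⟩

theorem toVertex_congr (hf : IsProjectiveSystem f) (hg : IsProjectiveSystem g) (h : f = g) :
    hf.toVertex = hg.toVertex := by
  subst h
  rfl

theorem exists_toVertex_eq (C : {C : Submodule F (Fin n → F) // IsSimplexCode k C}) :
    ∃ (f : Fin n → Dual F (Fin k → F)) (hf : IsProjectiveSystem f), hf.toVertex = C := by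
  obtain ⟨φ, hφ, hrange⟩ : ∃ φ : (Fin k → F) →ₗ[F] (Fin n → F),
      Injective φ ∧ LinearMap.range φ = C.1 := by
    let e : (Fin k → F) ≃ₗ[F] C.1 :=
      LinearEquiv.ofFinrankEq _ _ (by rw [finrank_fin_fun, C.2.1])
    refine ⟨C.1.subtype ∘ₗ e.toLinearMap, C.1.injective_subtype.comp e.injective, ?_⟩
    rw [LinearMap.range_comp, LinearEquiv.range, Submodule.map_top, Submodule.range_subtype]
  let f : Fin n → Dual F (Fin k → F) := fun i => LinearMap.proj i ∘ₗ φ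
  have hpi : LinearMap.pi f = φ := LinearMap.pi_proj_comp φ
  rw [← hpi] at hφ hrange
  have hC : IsSimplexCode (finrank F (Fin k → F)) (codeOf f) := by
    rw [codeOf, hrange, finrank_fin_fun]
    exact C.2
  obtain ⟨hne, hsmul⟩ := (isSimplexCode_codeOf_iff hφ).1 hC
  exact ⟨f, ⟨hφ, hne, hsmul⟩, Subtype.ext hrange⟩

theorem reachable_of_eqOn_ker (hf : IsProjectiveSystem f) (hg : IsProjectiveSystem g)
    {h : Dual F (Fin k → F)} (hh : h ≠ 0)
    (heq : Set.EqOn (LinearMap.pi f) (LinearMap.pi g) (LinearMap.ker h)) :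
    (simplexGraph F n k).Reachable hf.toVertex hg.toVertex :=
  simplexGraph.reachable_of_pred_le_finrank_inf _ _ <| by
    have := LinearMap.pred_finrank_le_finrank_inf_range hf.injective_pi hh heq
    rwa [finrank_fin_fun] at this

theorem reachable_comp_swap (hf : IsProjectiveSystem f) {i j : Fin n} (hij : i ≠ j) :
    (simplexGraph F n k).Reachable hf.toVertex (hf.comp_perm (Equiv.swap i j)).toVertex := by
  have hne : f i - f j ≠ 0 :=
    sub_ne_zero.2 fun h => hf.ne_smul j i hij.symm 1 (by simpa using h)
  refine hf.reachable_of_eqOn_ker _ hne fun v hv => funext fun m => ?_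
  have hfv : f i v = f j v := sub_eq_zero.1 hv
  rcases eq_or_ne m i with rfl | hmi
  · simp [hfv]
  rcases eq_or_ne m j with rfl | hmj
  · simp [hfv]
  · simp [Equiv.swap_apply_of_ne_of_ne hmi hmj]

theorem reachable_smul_mulSingle (hf : IsProjectiveSystem f) (i : Fin n) (u : Fˣ) :
    (simplexGraph F n k).Reachable hf.toVertex (hf.smul (Pi.mulSingle i u)).toVertex := by
  refine hf.reachable_of_eqOn_ker _ (hf.ne_zero i) fun v hv => funext fun m => ?_
  rcases eq_or_ne m i with rfl | hmi
  · simp_all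
  · simp [hmi]

theorem reachable_comp_perm (hf : IsProjectiveSystem f) (σ : Equiv.Perm (Fin n)) :
    (simplexGraph F n k).Reachable hf.toVertex (hf.comp_perm σ).toVertex := by
  induction σ using Equiv.Perm.swap_induction_on generalizing f with
  | one => rfl
  | swap_mul σ i j hij ih => exact (hf.reachable_comp_swap hij).trans (ih (hf.comp_perm _))

theorem reachable_smul (hf : IsProjectiveSystem f) (c : Fin n → Fˣ) :
    (simplexGraph F n k).Reachable hf.toVertex (hf.smul c).toVertex := by
  rw [← Finset.univ_prod_mulSingle c]
  refine Finset.prod_induction _ (fun c => ∀ f (hf : IsProjectiveSystem f),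
      (simplexGraph F n k).Reachable hf.toVertex (hf.smul c).toVertex)
    (fun c d hc hd f hf => ?_) (fun f hf => ?_)
    (fun i _ f hf => hf.reachable_smul_mulSingle i (c i)) f hf
  · rw [toVertex_congr _ ((hf.smul d).smul c) (mul_smul c d f)]
    exact (hd f hf).trans (hc _ _)
  · rw [toVertex_congr _ hf (one_smul _ f)]

theorem reachable_of_natCard_eq [Finite F] (hcard : Nat.card (ℙ F (Dual F (Fin k → F))) = n)
    (hf : IsProjectiveSystem f) (hg : IsProjectiveSystem g) :
    (simplexGraph F n k).Reachable hf.toVertex hg.toVertex := by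
  obtain ⟨σ, c, rfl⟩ := hf.exists_eq_smul_comp_perm (by rwa [Nat.card_fin]) hg
  exact (hf.reachable_comp_perm σ).trans ((hf.comp_perm σ).reachable_smul c)

end IsProjectiveSystem

end

theorem simplexGraph_connected_general {F : Type*} [Field F] [Fintype F]
    {q n k : ℕ} (hq : Fintype.card F = q)
    (hn : n * (q - 1) = q ^ k - 1) :
    (simplexGraph F n k).Connected := by
  have hcard : Nat.card (ℙ F (Dual F (Fin k → F))) = n := by
    apply natCard_projectivization_eq
    rwa [Subspace.dual_finrank_eq, finrank_fin_fun, Nat.card_eq_fintype_card, hq]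
  obtain ⟨f, hf⟩ :=
    exists_isProjectiveSystem (ι := Fin n) (V := Fin k → F) (by rwa [Nat.card_fin])
  have : Nonempty {C : Submodule F (Fin n → F) // IsSimplexCode k C} := ⟨hf.toVertex⟩
  refine ⟨fun C C' => ?_⟩
  obtain ⟨g, hg, rfl⟩ := IsProjectiveSystem.exists_toVertex_eq C
  obtain ⟨g', hg', rfl⟩ := IsProjectiveSystem.exists_toVertex_eq C'
  exact hg.reachable_of_natCard_eq hcard hg'

theorem simplexGraph_connected {F : Type*} [Field F] [Fintype F]
    {q n k : ℕ} (hq : Fintype.card F = q) (hk : 2 ≤ k)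
    (hn : n * (q - 1) = q ^ k - 1) :
    (simplexGraph F n k).Connected :=
  simplexGraph_connected_general hq hn
end

section
/- If M is a generator matrix of a q-ary simplex code C of dimension k, and M' is obtained from M by multiplying one column by a scalar a ∈ F_q \ {0,1}, then M' is a generator matrix of a simplex code C' with C ≠ C' and dim(C ∩ C') = k - 1. -/
open Module Submodule

lemma aux_count {F : Type*} [Field F] [Fintype F] {k : ℕ} {ι : Type*} [Fintype ι]
    (v : ι → (Fin k → F)) (hv0 : ∀ j, v j ≠ 0)
    (hvp : ∀ i j, i ≠ j → ∀ b : F, v j ≠ b • v i)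
    (W : Submodule F (Fin k → F)) (hker : ∀ j, v j ∈ W) :
    Fintype.card ι * (Fintype.card F - 1) ≤ Fintype.card F ^ (Module.finrank F W) - 1 := by
  classical
  let f : ι × Fˣ → {w : ↥W // w ≠ 0} := fun p =>
    ⟨⟨(p.2 : F) • v p.1, W.smul_mem _ (hker p.1)⟩, by
      intro h
      have h' : (p.2 : F) • v p.1 = 0 := congrArg Subtype.val h
      rcases smul_eq_zero.mp h' with h'' | h''
      · exact p.2.ne_zero h''
      · exact hv0 p.1 h''⟩
  have hf : Function.Injective f := by
    rintro ⟨j, u⟩ ⟨j', u'⟩ h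
    have h' : (u : F) • v j = (u' : F) • v j' :=
      congrArg Subtype.val (congrArg Subtype.val h)
    by_cases hj : j = j'
    · subst hj
      have : ((u : F) - (u' : F)) • v j = 0 := by
        rw [sub_smul, h', sub_self]
      rcases smul_eq_zero.mp this with h'' | h''
      · exact Prod.ext rfl (Units.ext (sub_eq_zero.mp h''))
      · exact absurd h'' (hv0 j)
    · exfalso
      apply hvp j j' hj ((u' : F)⁻¹ * (u : F))
      rw [mul_smul, h', inv_smul_smul₀ u'.ne_zero]
  have hcard := Fintype.card_le_of_injective f hf
  have h1 : Fintype.card (ι × Fˣ) = Fintype.card ι * (Fintype.card F - 1) := by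
    rw [Fintype.card_prod, Fintype.card_units]
  have h2 : Fintype.card {w : ↥W // w ≠ 0} = Fintype.card F ^ (Module.finrank F W) - 1 := by
    have := Fintype.card_subtype_compl (fun w : ↥W => w = 0)
    rw [Fintype.card_subtype_eq (0 : ↥W)] at this
    rw [this, card_eq_pow_finrank (K := F) (V := ↥W)]
  rw [h1, h2] at hcard
  exact hcard

lemma aux_key {F : Type*} [Field F] [Fintype F] {q n k : ℕ}
    (hq : Fintype.card F = q) (hk : 2 ≤ k) (hn : n * (q - 1) = q ^ k - 1)
    (M : Matrix (Fin k) (Fin n) F) (C : Submodule F (Fin n → F))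
    (hMspan : Submodule.span F (Set.range fun i => M i) = C)
    (hC : IsSimplexCode k C) (j₀ : Fin n) :
    ∀ c ∈ C, (∀ j, j ≠ j₀ → c j = 0) → c j₀ = 0 := by
  classical
  intro c hc h0
  by_contra hc0
  -- representation of codewords
  have hrep : ∀ c' ∈ C, ∃ x : Fin k → F, ∀ j, c' j = ∑ i, x i * M i j := by
    intro c' hc'
    rw [← hMspan, mem_span_range_iff_exists_fun] at hc'
    obtain ⟨x, hx⟩ := hc'
    exact ⟨x, fun j => by rw [← hx]; simp [Finset.sum_apply]⟩
  set v : Fin n → Fin k → F := fun j i => M i j with hv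
  have hv0 : ∀ j, v j ≠ 0 := by
    intro j hvj
    obtain ⟨c', hc', hcj⟩ := hC.2.1 j
    obtain ⟨x, hx⟩ := hrep c' hc'
    apply hcj
    rw [hx j]
    have : ∀ i, M i j = 0 := fun i => congrFun hvj i
    simp [this]
  have hvp : ∀ i j, i ≠ j → ∀ b : F, v j ≠ b • v i := by
    intro i j hij b hvij
    obtain ⟨c', hc', hcj⟩ := hC.2.2 i j hij b
    obtain ⟨x, hx⟩ := hrep c' hc'
    apply hcj
    rw [hx j, hx i]
    have : ∀ l, M l j = b * M l i := fun l => congrFun hvij l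
    simp only [this]
    rw [Finset.mul_sum]
    exact Finset.sum_congr rfl fun l _ => by ring
  obtain ⟨x, hx⟩ := hrep c hc
  set φ : (Fin k → F) →ₗ[F] F := ∑ i, x i • LinearMap.proj i with hφdef
  have hφ : ∀ w, φ w = ∑ i, x i * w i := by
    intro w
    simp [hφdef, LinearMap.sum_apply]
  have hφv : ∀ j, φ (v j) = c j := fun j => by rw [hφ, hx j]
  have hsurj : Function.Surjective φ := by
    intro y
    refine ⟨(y * (c j₀)⁻¹) • v j₀, ?_⟩
    rw [map_smul, hφv, smul_eq_mul, mul_assoc, inv_mul_cancel₀ hc0, mul_one]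
  have hrank : Module.finrank F (LinearMap.ker φ) = k - 1 := by
    have h1 := LinearMap.finrank_range_add_finrank_ker φ
    rw [LinearMap.range_eq_top.mpr hsurj, finrank_top, Module.finrank_self,
      Module.finrank_pi] at h1
    simp only [Fintype.card_fin] at h1
    omega
  -- apply the counting lemma
  have hcnt := aux_count (ι := {j : Fin n // j ≠ j₀}) (fun j => v j.1)
    (fun j => hv0 j.1)
    (fun i j hij b => hvp i.1 j.1 (fun h => hij (Subtype.ext h)) b)
    (LinearMap.ker φ)
    (fun j => by rw [LinearMap.mem_ker, hφv]; exact h0 j.1 j.2)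
  rw [hq, hrank] at hcnt
  have hsub : Fintype.card {j : Fin n // j ≠ j₀} = n - 1 := by
    rw [Fintype.card_subtype_compl, Fintype.card_subtype_eq, Fintype.card_fin]
  rw [hsub] at hcnt
  -- arithmetic contradiction
  have hq2 : 2 ≤ q := hq ▸ Fintype.one_lt_card
  have hn1 : 1 ≤ n := j₀.pos
  set A := q ^ (k - 1) with hA
  have hAq : q ≤ A := by
    calc q = q ^ 1 := (pow_one q).symm
    _ ≤ A := Nat.pow_le_pow_right (by omega) (by omega)
  have hAk : q ^ k = A * q := by
    rw [hA, ← pow_succ]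
    congr 1
    omega
  rw [hAk] at hn
  have hA1 : 1 ≤ A := by omega
  have hAq1 : 1 ≤ A * q := Nat.one_le_iff_ne_zero.mpr (by positivity)
  zify [hn1, (by omega : 1 ≤ q), hA1, hAq1] at hn hcnt
  nlinarith [mul_pos (by linarith : (0:ℤ) < (q:ℤ) - 1) (by linarith : (0:ℤ) < (A:ℤ) - 1),
    hn, hcnt]
noncomputable def scaleEquiv {F : Type*} [Field F] {n : ℕ} (a : F) (ha0 : a ≠ 0) (j₀ : Fin n) :
    (Fin n → F) ≃ₗ[F] (Fin n → F) where
  toFun f := fun j => if j = j₀ then a * f j else f j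
  invFun f := fun j => if j = j₀ then a⁻¹ * f j else f j
  map_add' f g := by funext j; by_cases h : j = j₀ <;> simp [h, mul_add]
  map_smul' c f := by funext j; by_cases h : j = j₀ <;> simp [h, mul_left_comm, smul_eq_mul]
  left_inv f := by funext j; by_cases h : j = j₀ <;> simp [h]; field_simp
  right_inv f := by funext j; by_cases h : j = j₀ <;> simp [h]; field_simp

theorem simplex_scale_column {F : Type*} [Field F] [Fintype F]
    {q n k : ℕ} (hq : Fintype.card F = q) (hk : 2 ≤ k)
    (hn : n * (q - 1) = q ^ k - 1)
    (M : Matrix (Fin k) (Fin n) F) (C : Submodule F (Fin n → F))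
    (hMli : LinearIndependent F (fun i => M i))
    (hMspan : Submodule.span F (Set.range fun i => M i) = C)
    (hC : IsSimplexCode k C)
    (a : F) (ha0 : a ≠ 0) (ha1 : a ≠ 1) (j₀ : Fin n)
    (M' : Matrix (Fin k) (Fin n) F)
    (hM' : ∀ i j, M' i j = if j = j₀ then a * M i j else M i j)
    (C' : Submodule F (Fin n → F))
    (hC' : C' = Submodule.span F (Set.range fun i => M' i)) :
    IsSimplexCode k C' ∧ C ≠ C' ∧ Module.finrank F ↥(C ⊓ C') = k - 1 := by
  classical
  set T := scaleEquiv a ha0 j₀ with hTdef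
  have hT : ∀ f : Fin n → F, ∀ j, T f j = if j = j₀ then a * f j else f j := fun f j => rfl
  have hT2 : ∀ f : Fin n → F, ∀ j, (T : (Fin n → F) →ₗ[F] (Fin n → F)) f j =
      if j = j₀ then a * f j else f j := fun f j => rfl
  have hM'T : (fun i => M' i) = (T : (Fin n → F) →ₗ[F] (Fin n → F)) ∘ (fun i => M i) := by
    funext i j
    rw [hM']
    rfl
  have hC'map : C' = C.map (T : (Fin n → F) →ₗ[F] (Fin n → F)) := by
    rw [hC', hM'T, Set.range_comp, ← Submodule.map_span, hMspan]
  have hmem : ∀ c ∈ C, T c ∈ C' := by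
    intro c hc
    rw [hC'map]
    exact Submodule.mem_map_of_mem hc
  have hkey := aux_key hq hk hn M C hMspan hC j₀
  -- C' is a simplex code
  have hsimp : IsSimplexCode k C' := by
    refine ⟨?_, ?_, ?_⟩
    · rw [hC'map, LinearEquiv.finrank_map_eq]
      exact hC.1
    · intro i
      obtain ⟨c, hc, hci⟩ := hC.2.1 i
      refine ⟨T c, hmem c hc, ?_⟩
      rw [hT]
      split
      · exact mul_ne_zero ha0 hci
      · exact hci
    · intro i j hij b
      set α : F := if j = j₀ then a else 1 with hαdef
      set β : F := if i = j₀ then a else 1 with hβdef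
      have hα : α ≠ 0 := by
        rw [hαdef]; split
        · exact ha0
        · exact one_ne_zero
      obtain ⟨c, hc, hcj⟩ := hC.2.2 i j hij (α⁻¹ * b * β)
      refine ⟨T c, hmem c hc, ?_⟩
      have h1 : T c j = α * c j := by rw [hT, hαdef]; split <;> simp
      have h2 : T c i = β * c i := by rw [hT, hβdef]; split <;> simp
      rw [h1, h2]
      intro h
      apply hcj
      calc c j = α⁻¹ * (α * c j) := by rw [inv_mul_cancel_left₀ hα]
        _ = α⁻¹ * (b * (β * c i)) := by rw [h]
        _ = α⁻¹ * b * β * c i := by ring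
  -- the intersection
  set ψ : ↥C →ₗ[F] F := (LinearMap.proj j₀).comp C.subtype with hψdef
  have hψap : ∀ z : ↥C, ψ z = (z : Fin n → F) j₀ := fun z => rfl
  have hinf : C ⊓ C' = Submodule.map C.subtype (LinearMap.ker ψ) := by
    ext z
    constructor
    · rintro ⟨hzC, hzC'⟩
      rw [hC'map] at hzC'
      obtain ⟨d, hd, hdz⟩ := hzC'
      have hsub : z - d ∈ C := Submodule.sub_mem C hzC hd
      have h0 : ∀ j, j ≠ j₀ → (z - d) j = 0 := by
        intro j hj
        have : z j = d j := by rw [← hdz, hT2]; simp [hj]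
        simp [this]
      have hz0 : (z - d) j₀ = 0 := hkey _ hsub h0
      have hzj : z j₀ = d j₀ := by
        have := hz0
        simp only [Pi.sub_apply, sub_eq_zero] at this
        exact this
      have hza : z j₀ = a * d j₀ := by rw [← hdz, hT2]; simp
      have hdj0 : d j₀ = 0 := by
        have heq : d j₀ = a * d j₀ := by nth_rewrite 1 [← hzj]; exact hza
        by_contra hd0
        apply ha1
        exact (mul_right_cancel₀ hd0 (by rw [← heq]; ring : (1:F) * d j₀ = a * d j₀)).symm
      refine ⟨⟨z, hzC⟩, ?_, rfl⟩
      simp only [SetLike.mem_coe, LinearMap.mem_ker, hψap]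
      rw [hzj]
      exact hdj0
    · rintro ⟨⟨z', hz'⟩, hker, rfl⟩
      simp only [SetLike.mem_coe, LinearMap.mem_ker, hψap] at hker
      show z' ∈ C ⊓ C'
      rw [Submodule.mem_inf]
      refine ⟨hz', ?_⟩
      have : T z' = z' := by
        funext j
        rw [hT]
        split
        · rename_i h; rw [h, hker, mul_zero]
        · rfl
      rw [hC'map]
      exact ⟨z', hz', this⟩
  have hψsurj : Function.Surjective ψ := by
    obtain ⟨c, hc, hc0⟩ := hC.2.1 j₀
    intro y
    refine ⟨(y * (c j₀)⁻¹) • ⟨c, hc⟩, ?_⟩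
    rw [map_smul, hψap, smul_eq_mul, mul_assoc, inv_mul_cancel₀ hc0, mul_one]
  have hfr : Module.finrank F ↥(C ⊓ C') = k - 1 := by
    rw [hinf, Submodule.finrank_map_subtype_eq]
    have h1 := LinearMap.finrank_range_add_finrank_ker ψ
    rw [LinearMap.range_eq_top.mpr hψsurj, finrank_top, Module.finrank_self, hC.1] at h1
    omega
  refine ⟨hsimp, ?_, hfr⟩
  intro h
  rw [← h, inf_idem, hC.1] at hfr
  omega
end

section
/- If M is a generator matrix of a q-ary simplex code C of dimension k and M' is obtained from M by transposing two columns, and C' is the code generated by M', then either C = C' or dim(C ∩ C') = k - 1; moreover if the two transposed columns are non-proportional then C' is again a simplex code. -/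
open Module Submodule

theorem simplex_swap_columns {F : Type*} [Field F] [Fintype F]
    {q n k : ℕ} (hq : Fintype.card F = q) (hk : 2 ≤ k)
    (hn : n * (q - 1) = q ^ k - 1) (hqk : ¬(q = 2 ∧ k = 2))
    (M : Matrix (Fin k) (Fin n) F) (C : Submodule F (Fin n → F))
    (hMli : LinearIndependent F (fun i => M i))
    (hMspan : Submodule.span F (Set.range fun i => M i) = C)
    (hC : IsSimplexCode k C)
    (j₁ j₂ : Fin n) (hj : j₁ ≠ j₂)
    (M' : Matrix (Fin k) (Fin n) F)
    (hM' : ∀ i j, M' i j = M i (Equiv.swap j₁ j₂ j))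
    (C' : Submodule F (Fin n → F))
    (hC' : C' = Submodule.span F (Set.range fun i => M' i)) :
    (C = C' ∨ Module.finrank F ↥(C ⊓ C') = k - 1) ∧
    ((¬ ∃ a : F, ∀ i, M i j₂ = a * M i j₁) → IsSimplexCode k C') := by
  classical
  set e : Equiv.Perm (Fin n) := Equiv.swap j₁ j₂ with he
  set σ : (Fin n → F) ≃ₗ[F] (Fin n → F) := LinearEquiv.funCongrLeft F F e with hσ
  have hσapp : ∀ (c : Fin n → F) (j : Fin n), σ c j = c (e j) := fun c j => rfl
  have hmap : C' = Submodule.map (σ : (Fin n → F) →ₗ[F] Fin n → F) C := by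
    rw [hC', ← hMspan, Submodule.map_span, ← Set.range_comp]
    exact congrArg _ (congrArg _ (funext fun i => funext fun j => hM' i j))
  have hfr : finrank F C = k := hC.1
  have hfr' : finrank F C' = k := by
    rw [hmap, LinearEquiv.finrank_map_eq σ C]; exact hfr
  have hmem' : ∀ c ∈ C, σ c ∈ C' := by
    intro c hc
    rw [hmap]
    exact Submodule.mem_map_of_mem hc
  constructor
  · by_cases hle : C ≤ C'
    · left
      exact Submodule.eq_of_le_of_finrank_eq hle (by rw [hfr, hfr'])
    · right
      set u : Fin n → F := Pi.single j₁ 1 - Pi.single j₂ 1 with hu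
      have hC'le : C' ≤ C ⊔ Submodule.span F {u} := by
        rw [hmap]
        rintro _ ⟨c, hc, rfl⟩
        have hdecomp : σ c = c + (c j₂ - c j₁) • u := by
          funext j
          have hrfl : σ c j = c (e j) := rfl
          rw [hrfl]
          simp only [Pi.add_apply, Pi.smul_apply, hu, Pi.sub_apply, smul_eq_mul]
          rcases eq_or_ne j j₁ with rfl | h1
          · rw [he, Equiv.swap_apply_left, Pi.single_eq_same, Pi.single_eq_of_ne hj]; ring
          · rcases eq_or_ne j j₂ with rfl | h2
            · rw [he, Equiv.swap_apply_right, Pi.single_eq_same,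
                Pi.single_eq_of_ne (Ne.symm hj)]; ring
            · rw [he, Equiv.swap_apply_of_ne_of_ne h1 h2, Pi.single_eq_of_ne h1,
                Pi.single_eq_of_ne h2]; ring
        show σ c ∈ C ⊔ Submodule.span F {u}
        rw [hdecomp]
        exact add_mem (Submodule.mem_sup_left hc)
          (Submodule.mem_sup_right (Submodule.smul_mem _ _ (Submodule.subset_span rfl)))
      have hufr : finrank F (Submodule.span F ({u} : Set (Fin n → F))) ≤ 1 := by
        have hune : u ≠ 0 := by
          intro h
          have h2 := congrFun h j₁
          rw [hu] at h2
          simp only [Pi.sub_apply, Pi.zero_apply, Pi.single_eq_same,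
            Pi.single_eq_of_ne hj] at h2
          norm_num at h2
        rw [finrank_span_singleton hune]
      have hsup : finrank F ↥(C ⊔ C') ≤ k + 1 := by
        calc finrank F ↥(C ⊔ C') ≤ finrank F ↥(C ⊔ Submodule.span F {u}) :=
              Submodule.finrank_mono (sup_le le_sup_left hC'le)
          _ ≤ finrank F C + finrank F (Submodule.span F ({u} : Set (Fin n → F))) :=
              Submodule.finrank_add_le_finrank_add_finrank _ _
          _ ≤ k + 1 := by rw [hfr]; omega
      have heq := Submodule.finrank_sup_add_finrank_inf_eq C C'
      have hlt : finrank F ↥(C ⊓ C') < k := by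
        rw [← hfr]
        refine Submodule.finrank_lt_finrank_of_lt (lt_of_le_of_ne inf_le_left ?_)
        intro h
        exact hle (h ▸ inf_le_right)
      rw [hfr, hfr'] at heq
      omega
  · intro _
    refine ⟨hfr', ?_, ?_⟩
    · intro i
      obtain ⟨c, hc, hci⟩ := hC.2.1 (e i)
      exact ⟨σ c, hmem' c hc, by rwa [hσapp]⟩
    · intro i j hij a
      obtain ⟨c, hc, hcij⟩ := hC.2.2 (e i) (e j) (fun h => hij (e.injective h)) a
      exact ⟨σ c, hmem' c hc, by rwa [hσapp, hσapp]⟩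
end

section
/- Let q ≥ 5 be a prime power, n = q + 1, and let α be a primitive element (generator of the multiplicative group) of F_q. Define x, y, z ∈ F_q^{q+1} by: x = (0,1,1,…,1); y = (1,0,α^0,α^1,…,α^{q-2}); z = (1, g(1+0), g(1+α^0), g(1+α^{-1}),…, g(1+α^{-(q-2)})), where g(t) = t^{-1} for t ≠ 0 and g(0) = 0. Then x, y, z are linearly independent, and each of the 2-dimensional subspaces ⟨x,y⟩, ⟨x,z⟩, ⟨y,z⟩ is a q-ary simplex code of dimension 2. -/
open Module Submodule

section Aux

variable {F : Type*} [Field F] {n : ℕ}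

/-- Two rows with a nonzero 2x2 minor are linearly independent. -/
lemma cross_li (u v : Fin n → F) {i j : Fin n}
    (h : u i * v j ≠ u j * v i) : LinearIndependent F ![u, v] := by
  rw [LinearIndependent.pair_iff]
  intro s t hst
  have hi : s * u i + t * v i = 0 := by
    have := congrFun hst i; simpa using this
  have hj : s * u j + t * v j = 0 := by
    have := congrFun hst j; simpa using this
  constructor
  · by_contra hs
    exact h (mul_left_cancel₀ hs (by linear_combination v j * hi - v i * hj))
  · by_contra ht
    exact h (mul_left_cancel₀ ht (by linear_combination u i * hj - u j * hi))

lemma cross_simplex (hn : 2 ≤ n) (u v : Fin n → F)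
    (h : ∀ i j : Fin n, i ≠ j → u i * v j ≠ u j * v i) :
    IsSimplexCode 2 (Submodule.span F {u, v}) := by
  have h01 : ((⟨0, by omega⟩ : Fin n)) ≠ (⟨1, by omega⟩ : Fin n) := by
    intro hh; simpa using congrArg Fin.val hh
  refine ⟨?_, ?_, ?_⟩
  · have li := cross_li u v (h _ _ h01)
    have hr : Set.range ![u, v] = {u, v} := by
      simp only [Matrix.range_cons, Matrix.range_empty, Set.union_empty,
        Set.union_singleton, Set.range_zero]
      exact Set.pair_comm v u
    rw [show ({u, v} : Set (Fin n → F)) = Set.range ![u, v] from hr.symm]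
    rw [finrank_span_eq_card li]
    simp
  · intro i
    by_cases hu : u i = 0
    · have : ∃ j : Fin n, j ≠ i := by
        by_cases hi : (i : ℕ) = 0
        · refine ⟨⟨1, by omega⟩, fun hh => ?_⟩
          have h2 := congrArg Fin.val hh
          simp [hi] at h2
        · refine ⟨⟨0, by omega⟩, fun hh => ?_⟩
          have h2 := congrArg Fin.val hh
          simp at h2
          exact hi h2.symm
      obtain ⟨j, hji⟩ := this
      refine ⟨v, subset_span (Set.mem_insert_of_mem _ rfl), ?_⟩
      intro hv
      exact h i j (Ne.symm hji) (by rw [hu, hv]; ring)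
    · exact ⟨u, subset_span (Set.mem_insert _ _), hu⟩
  · intro i j hij a
    by_cases hu : u j = a * u i
    · refine ⟨v, subset_span (Set.mem_insert_of_mem _ rfl), ?_⟩
      intro hv
      exact h i j hij (by rw [hu, hv]; ring)
    · exact ⟨u, subset_span (Set.mem_insert _ _), hu⟩

lemma cross_of_lt {u v : Fin n → F}
    (h : ∀ i j : Fin n, (i : ℕ) < (j : ℕ) → u i * v j ≠ u j * v i) :
    ∀ i j : Fin n, i ≠ j → u i * v j ≠ u j * v i := by
  intro i j hij
  rcases lt_or_gt_of_ne (fun hh : (i:ℕ) = (j:ℕ) => hij (Fin.ext hh)) with hlt | hgt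
  · exact h i j hlt
  · exact (h j i hgt).symm

lemma exists_good {F : Type*} [Field F] [Fintype F] (hq : 5 ≤ Fintype.card F) :
    ∃ t : Fˣ, (t : F) ≠ -1 ∧ (t : F) ^ 2 + (t : F) + 1 ≠ 0 := by
  by_contra hcon
  push_neg at hcon
  have hpair : ∀ a b : Fˣ, (a : F) ≠ -1 → (b : F) ≠ -1 → a ≠ b →
      (a : F) + (b : F) = -1 := by
    intro a b ha hb hab
    have h1 := hcon a ha
    have h2 := hcon b hb
    have hne : (a : F) ≠ b := fun hh => hab (Units.ext hh)
    have h3 : ((a : F) - b) * ((a : F) + b + 1) = 0 := by linear_combination h1 - h2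
    rcases mul_eq_zero.mp h3 with hh | hh
    · exact absurd (sub_eq_zero.mp hh) hne
    · linear_combination hh
  classical
  have hcard : 4 ≤ Fintype.card Fˣ := by
    rw [Fintype.card_units]; omega
  have h1 : (Finset.univ.filter (fun t : Fˣ => ¬ ((t : F) ≠ -1))).card ≤ 1 := by
    apply Finset.card_le_one.mpr
    intro a ha b hb
    simp only [ne_eq, not_not, Finset.mem_filter] at ha hb
    exact Units.ext (ha.2.trans hb.2.symm)
  have h2 := Finset.card_filter_add_card_filter_not
    (s := (Finset.univ : Finset Fˣ)) (p := fun t : Fˣ => (t : F) ≠ -1)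
  rw [Finset.card_univ] at h2
  have hSc : 2 < (Finset.univ.filter (fun t : Fˣ => (t : F) ≠ -1)).card := by omega
  obtain ⟨a, b, c, ha, hb, hc, hab, hac, hbc⟩ := Finset.two_lt_card_iff.mp hSc
  simp only [Finset.mem_filter, Finset.mem_univ, true_and] at ha hb hc
  have e1 := hpair a b ha hb hab
  have e2 := hpair a c ha hc hac
  exact hbc (Units.ext (by linear_combination e1 - e2))

end Aux
theorem simplex_top_dim_two {F : Type*} [Field F] [Fintype F]
    (hq : 5 ≤ Fintype.card F)
    (α : Fˣ) (hα : ∀ u : Fˣ, u ∈ Subgroup.zpowers α)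
    (x y z : Fin (Fintype.card F + 1) → F)
    (hx : ∀ j, x j = if (j : ℕ) = 0 then 0 else 1)
    (hy : ∀ j, y j = if (j : ℕ) = 0 then 1 else
        if (j : ℕ) = 1 then 0 else (α : F) ^ ((j : ℕ) - 2))
    (hz : ∀ j, z j = if (j : ℕ) = 0 then 1 else
        if (j : ℕ) = 1 then 1 else (1 + ((α : F)⁻¹) ^ ((j : ℕ) - 2))⁻¹) :
    LinearIndependent F ![x, y, z] ∧
    IsSimplexCode 2 (Submodule.span F {x, y}) ∧
    IsSimplexCode 2 (Submodule.span F {x, z}) ∧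
    IsSimplexCode 2 (Submodule.span F {y, z}) := by
  classical
  have hn : 2 ≤ Fintype.card F + 1 := by omega
  have hord : orderOf α = Fintype.card F - 1 := by
    have h := orderOf_eq_card_of_forall_mem_zpowers hα
    rwa [Nat.card_units, Nat.card_eq_fintype_card] at h
  have hαF : (α : F) ≠ 0 := Units.ne_zero α
  have hpow_inj : ∀ a b : ℕ, a < Fintype.card F - 1 → b < Fintype.card F - 1 →
      (α : F) ^ a = (α : F) ^ b → a = b := by
    intro a b ha hb h
    have h' : α ^ a = α ^ b := Units.ext (by push_cast; exact h)
    exact pow_injOn_Iio_orderOf (by simpa [hord] using ha) (by simpa [hord] using hb) h'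
  have hpne : ∀ k : ℕ, (α : F) ^ k ≠ 0 := fun k => pow_ne_zero k hαF
  have hrw : ∀ T : F, T ≠ 0 → (1 + T⁻¹)⁻¹ = T * (1 + T)⁻¹ := by
    intro T hT
    rw [show (1 : F) + T⁻¹ = (1 + T) * T⁻¹ by
      rw [add_mul, one_mul, mul_inv_cancel₀ hT, add_comm], mul_inv_rev, inv_inv]
  have hinvpow : ∀ k : ℕ, ((α : F)⁻¹) ^ k = ((α : F) ^ k)⁻¹ := fun k => inv_pow _ k
  -- value lemmas
  have vx0 : ∀ j : Fin (Fintype.card F + 1), (j : ℕ) = 0 → x j = 0 := fun j h => by rw [hx, if_pos h]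
  have vx1 : ∀ j : Fin (Fintype.card F + 1), (j : ℕ) ≠ 0 → x j = 1 := fun j h => by rw [hx, if_neg h]
  have vy0 : ∀ j : Fin (Fintype.card F + 1), (j : ℕ) = 0 → y j = 1 := fun j h => by rw [hy, if_pos h]
  have vy1 : ∀ j : Fin (Fintype.card F + 1), (j : ℕ) = 1 → y j = 0 := fun j h => by
    rw [hy, if_neg (by omega), if_pos h]
  have vy2 : ∀ j : Fin (Fintype.card F + 1), (j : ℕ) ≠ 0 → (j : ℕ) ≠ 1 → y j = (α : F) ^ ((j : ℕ) - 2) :=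
    fun j h0 h1 => by rw [hy, if_neg h0, if_neg h1]
  have vz0 : ∀ j : Fin (Fintype.card F + 1), (j : ℕ) = 0 → z j = 1 := fun j h => by rw [hz, if_pos h]
  have vz1 : ∀ j : Fin (Fintype.card F + 1), (j : ℕ) = 1 → z j = 1 := fun j h => by
    rw [hz, if_neg (by omega), if_pos h]
  have vz2 : ∀ j : Fin (Fintype.card F + 1), (j : ℕ) ≠ 0 → (j : ℕ) ≠ 1 →
      z j = (1 + ((α : F) ^ ((j : ℕ) - 2))⁻¹)⁻¹ :=
    fun j h0 h1 => by rw [hz, if_neg h0, if_neg h1, hinvpow]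
  -- cross conditions
  have hxy : ∀ i j : Fin (Fintype.card F + 1), (i : ℕ) < (j : ℕ) →
      x i * y j ≠ x j * y i := by
    intro i j hij
    have hjq : (j : ℕ) < Fintype.card F + 1 := j.isLt
    by_cases hi0 : (i : ℕ) = 0
    · rw [vx0 i hi0, vy0 i hi0, vx1 j (by omega)]
      simp
    · have hj0 : (j : ℕ) ≠ 0 := by omega
      have hj1 : (j : ℕ) ≠ 1 := by omega
      by_cases hi1 : (i : ℕ) = 1
      · rw [vx1 i hi0, vy1 i hi1, vx1 j hj0, vy2 j hj0 hj1]
        simp [hpne]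
      · rw [vx1 i hi0, vx1 j hj0, vy2 i hi0 hi1, vy2 j hj0 hj1, one_mul, one_mul]
        intro h
        have := hpow_inj _ _ (by omega) (by omega) h
        omega
  have hxz : ∀ i j : Fin (Fintype.card F + 1), (i : ℕ) < (j : ℕ) →
      x i * z j ≠ x j * z i := by
    intro i j hij
    have hjq : (j : ℕ) < Fintype.card F + 1 := j.isLt
    by_cases hi0 : (i : ℕ) = 0
    · rw [vx0 i hi0, vz0 i hi0, vx1 j (by omega)]
      simp
    · have hj0 : (j : ℕ) ≠ 0 := by omega
      have hj1 : (j : ℕ) ≠ 1 := by omega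
      by_cases hi1 : (i : ℕ) = 1
      · rw [vx1 i hi0, vz1 i hi1, vx1 j hj0, vz2 j hj0 hj1, one_mul, one_mul]
        intro h
        have h2 := inv_injective (h.trans inv_one.symm)
        have h3 : ((α : F) ^ ((j : ℕ) - 2))⁻¹ = 0 := by linear_combination h2
        exact hpne _ (inv_eq_zero.mp h3)
      · rw [vx1 i hi0, vx1 j hj0, vz2 i hi0 hi1, vz2 j hj0 hj1, one_mul, one_mul]
        intro h
        have h2 := inv_injective h
        have h3 : ((α : F) ^ ((j : ℕ) - 2))⁻¹ = ((α : F) ^ ((i : ℕ) - 2))⁻¹ := by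
          linear_combination h2
        have h4 := inv_injective h3
        have := hpow_inj _ _ (by omega) (by omega) h4
        omega
  have hyz : ∀ i j : Fin (Fintype.card F + 1), (i : ℕ) < (j : ℕ) →
      y i * z j ≠ y j * z i := by
    intro i j hij
    have hjq : (j : ℕ) < Fintype.card F + 1 := j.isLt
    by_cases hi0 : (i : ℕ) = 0
    · have hj0 : (j : ℕ) ≠ 0 := by omega
      by_cases hj1 : (j : ℕ) = 1
      · rw [vy0 i hi0, vz0 i hi0, vy1 j hj1, vz1 j hj1]
        simp
      · rw [vy0 i hi0, vz0 i hi0, vy2 j hj0 hj1, vz2 j hj0 hj1, one_mul, mul_one,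
          hrw _ (hpne ((j : ℕ) - 2))]
        intro h
        have h2 := mul_left_cancel₀ (hpne ((j : ℕ) - 2)) (h.trans (mul_one _).symm)
        have h3 := inv_injective (h2.trans inv_one.symm)
        exact hpne ((j : ℕ) - 2) (by linear_combination h3)
    · have hj0 : (j : ℕ) ≠ 0 := by omega
      have hj1 : (j : ℕ) ≠ 1 := by omega
      by_cases hi1 : (i : ℕ) = 1
      · rw [vy1 i hi1, vz1 i hi1, vy2 j hj0 hj1, mul_one]
        intro h
        exact hpne ((j : ℕ) - 2) (by linear_combination -h)
      · rw [vy2 i hi0 hi1, vy2 j hj0 hj1, vz2 i hi0 hi1, vz2 j hj0 hj1,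
          hrw _ (hpne ((i : ℕ) - 2)), hrw _ (hpne ((j : ℕ) - 2))]
        intro h
        have hST : (α : F) ^ ((i : ℕ) - 2) ≠ (α : F) ^ ((j : ℕ) - 2) := by
          intro hh
          have := hpow_inj _ _ (by omega) (by omega) hh
          omega
        have h2 : (α : F) ^ ((i : ℕ) - 2) * (α : F) ^ ((j : ℕ) - 2) *
            (1 + (α : F) ^ ((j : ℕ) - 2))⁻¹ =
            (α : F) ^ ((i : ℕ) - 2) * (α : F) ^ ((j : ℕ) - 2) *
            (1 + (α : F) ^ ((i : ℕ) - 2))⁻¹ := by linear_combination h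
        have h3 := mul_left_cancel₀ (mul_ne_zero (hpne _) (hpne _)) h2
        have h4 := inv_injective h3
        exact hST (by linear_combination -h4)
  -- linear independence of the triple
  have hli : LinearIndependent F ![x, y, z] := by
    rw [Fintype.linearIndependent_iff]
    intro g hg
    have hsum : g 0 • x + g 1 • y + g 2 • z = 0 := by
      simpa [Fin.sum_univ_three, add_assoc] using hg
    have e : ∀ j : Fin (Fintype.card F + 1),
        g 0 * x j + g 1 * y j + g 2 * z j = 0 := by
      intro j
      have := congrFun hsum j
      simpa [mul_comm] using this
    have e0 : g 1 + g 2 = 0 := by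
      have h := e ⟨0, by omega⟩
      rw [vx0 _ rfl, vy0 _ rfl, vz0 _ rfl] at h
      linear_combination h
    have e1 : g 0 + g 2 = 0 := by
      have h := e ⟨1, by omega⟩
      rw [vx1 _ (by simp), vy1 _ rfl, vz1 _ rfl] at h
      linear_combination h
    have hg2 : g 2 = 0 := by
      by_contra hc
      obtain ⟨t, ht1, ht2⟩ := exists_good hq
      obtain ⟨m, hm0⟩ := (IsOfFinOrder.mem_powers_iff_mem_zpowers
        (isOfFinOrder_of_finite _)).mpr (hα t)
      have hm : α ^ m = t := hm0
      have hklt : m % (Fintype.card F - 1) < Fintype.card F - 1 :=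
        Nat.mod_lt _ (by omega)
      have hkt : (α : F) ^ (m % (Fintype.card F - 1)) = (t : F) := by
        have h' : α ^ (m % (Fintype.card F - 1)) = t := by
          rw [← hord, pow_mod_orderOf, hm]
        exact_mod_cast congrArg Units.val h'
      set k := m % (Fintype.card F - 1) with hk
      have hjlt : k + 2 < Fintype.card F + 1 := by omega
      set jk : Fin (Fintype.card F + 1) := ⟨k + 2, hjlt⟩ with hjk
      have hjkv : (jk : ℕ) = k + 2 := rfl
      have eqn := e jk
      rw [vx1 jk (by omega), vy2 jk (by omega) (by omega),
        vz2 jk (by omega) (by omega), hjkv, Nat.add_sub_cancel, hkt,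
        hrw _ (Units.ne_zero t)] at eqn
      have h1t : (1 : F) + t ≠ 0 := fun h => ht1 (by linear_combination h)
      have hinv : ((1 : F) + t) * ((1 : F) + t)⁻¹ = 1 := mul_inv_cancel₀ h1t
      have h5 : g 2 * ((t : F) * ((1 : F) + t)⁻¹ - 1 - t) = 0 := by
        linear_combination eqn - (t : F) * e0 - e1
      have h6 : (t : F) * ((1 : F) + t)⁻¹ - 1 - t = 0 :=
        (mul_eq_zero.mp h5).resolve_left hc
      exact ht2 (by linear_combination (-(1 + (t : F))) * h6 + (t : F) * hinv)
    have hg1 : g 1 = 0 := by linear_combination e0 - hg2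
    have hg0 : g 0 = 0 := by linear_combination e1 - hg2
    intro i
    fin_cases i <;> assumption
  exact ⟨hli,
    cross_simplex hn x y (cross_of_lt hxy),
    cross_simplex hn x z (cross_of_lt hxz),
    cross_simplex hn y z (cross_of_lt hyz)⟩
end

section
/- Let C ⊆ F_q^n (n = (q^k-1)/(q-1)) be a maximal q^{k-1}-equidistant code, i.e., a q-ary simplex code of dimension k. Then for any vector c ∈ F_q^n \ C, the subspace ⟨c⟩ + C contains a nonzero vector whose Hamming weight is not q^{k-1}. -/
/-!
Double counting. In a linear code `D` of dimension `d` over `F_q`, each coordinate is either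
identically zero on `D` or nonzero on exactly `q^d - q^(d-1)` codewords, so `q^(d-1) (q - 1)`
divides the total weight. If every nonzero codeword has weight `w`, the total weight is
`(q^d - 1) w`, and as `q^d - 1` is prime to `q` this forces `q^(d-1) ∣ w`. Adjoining `c ∉ C` to
the simplex code gives `d = k + 1`, and `q^k ∤ q^(k-1)`.
-/

open Module Submodule

open Finset

theorem sum_hammingNorm_eq_sum_card_filter_ne_zero {α ι : Type*} [Fintype ι] {β : ι → Type*}
    [∀ i, Zero (β i)] [∀ i, DecidableEq (β i)] (s : Finset α) (f : α → ∀ i, β i) :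
    ∑ a ∈ s, hammingNorm (f a) = ∑ i, #{a ∈ s | f a i ≠ 0} := by
  simp only [hammingNorm, card_filter]
  exact sum_comm

section

variable {F V : Type*} [Field F] [Fintype F] [DecidableEq F]
  [AddCommGroup V] [Module F V] [Fintype V]

theorem Module.Dual.card_filter_ne_zero_of_ne_zero {φ : Module.Dual F V} (hφ : φ ≠ 0) :
    #{v | φ v ≠ 0} = Fintype.card F ^ (finrank F V - 1) * (Fintype.card F - 1) := by
  classical
  have hker : finrank F (LinearMap.ker φ) + 1 = finrank F V :=
    Module.Dual.finrank_ker_add_one_of_ne_zero hφ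
  have hcard_ker : #{v | φ v = 0} = Fintype.card F ^ (finrank F V - 1) := by
    rw [← hker, Nat.add_sub_cancel, ← card_eq_pow_finrank, Fintype.card_subtype]
    simp only [LinearMap.mem_ker]
  have hsplit := card_filter_add_card_filter_not (s := univ) (p := fun v => φ v = 0)
  rw [card_univ, card_eq_pow_finrank (K := F), hcard_ker, ← hker, Nat.add_sub_cancel,
    pow_succ] at hsplit
  rw [← hker, Nat.add_sub_cancel, Nat.mul_sub, mul_one]
  simp only [ne_eq]
  omega

theorem card_pow_mul_dvd_sum_hammingNorm {ι : Type*} [Fintype ι] (f : V →ₗ[F] ι → F) :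
    Fintype.card F ^ (finrank F V - 1) * (Fintype.card F - 1) ∣ ∑ v, hammingNorm (f v) := by
  rw [sum_hammingNorm_eq_sum_card_filter_ne_zero]
  refine dvd_sum fun i _ => ?_
  by_cases hφ : LinearMap.proj i ∘ₗ f = 0
  · have hzero : ∀ v, f v i = 0 := fun v => LinearMap.congr_fun hφ v
    simp [hzero]
  · exact (Module.Dual.card_filter_ne_zero_of_ne_zero hφ).symm.dvd

theorem card_pow_dvd_of_hammingNorm_eq {ι : Type*} [Fintype ι] (f : V →ₗ[F] ι → F) {w : ℕ}
    (hw : ∀ v ≠ 0, hammingNorm (f v) = w) :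
    Fintype.card F ^ (finrank F V - 1) ∣ w := by
  classical
  set q := Fintype.card F
  set d := finrank F V
  have hsum : ∑ v, hammingNorm (f v) = (q ^ d - 1) * w := by
    rw [← sum_erase_add _ _ (mem_univ 0), map_zero, hammingNorm_zero, add_zero,
      sum_congr rfl fun v hv => hw v (ne_of_mem_erase hv), sum_const,
      card_erase_of_mem (mem_univ _), card_univ, card_eq_pow_finrank (K := F), smul_eq_mul]
  have hdvd : q ^ (d - 1) ∣ (q ^ d - 1) * w :=
    hsum ▸ (dvd_mul_right _ _).trans (card_pow_mul_dvd_sum_hammingNorm f)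
  -- `q ^ d - 1` is coprime to `q ^ d`, hence to its divisor `q ^ (d - 1)`.
  have hcop : Nat.Coprime (q ^ d - 1) (q ^ (d - 1)) :=
    ((Nat.coprime_self_sub_left (Nat.one_le_pow _ _ Fintype.card_pos)).2 (Nat.coprime_one_left _)
      ).coprime_dvd_right (pow_dvd_pow q (Nat.sub_le d 1))
  exact hcop.symm.dvd_of_dvd_mul_left hdvd

end

theorem simplex_maximal_equidistant_general {F : Type*} [Field F] [Fintype F] [DecidableEq F]
    {q n k : ℕ} (hq : Fintype.card F = q) (hk : 2 ≤ k)
    (C : Submodule F (Fin n → F)) (hC : IsSimplexCode k C)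
    (c : Fin n → F) (hc : c ∉ C) :
    ∃ v ∈ Submodule.span F {c} ⊔ C, v ≠ 0 ∧ hammingNorm v ≠ q ^ (k - 1) := by
  classical
  by_contra! hequi
  have hD : finrank F ↥(Submodule.span F {c} ⊔ C) = k + 1 := by
    rw [sup_comm, finrank_sup_span_singleton hc, hC.1]
  have hdvd := card_pow_dvd_of_hammingNorm_eq (Submodule.span F {c} ⊔ C).subtype
    fun v hv => hequi v v.2 (by simpa using hv)
  rw [hD, hq, Nat.add_sub_cancel] at hdvd
  have hq1 : 1 < q := hq ▸ Fintype.one_lt_card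
  exact absurd ((Nat.pow_dvd_pow_iff_le_right hq1).1 hdvd) (by omega)

theorem simplex_maximal_equidistant {F : Type*} [Field F] [Fintype F] [DecidableEq F]
    {q n k : ℕ} (hq : Fintype.card F = q) (hk : 2 ≤ k)
    (hn : n * (q - 1) = q ^ k - 1)
    (C : Submodule F (Fin n → F)) (hC : IsSimplexCode k C)
    (c : Fin n → F) (hc : c ∉ C) :
    ∃ v ∈ Submodule.span F {c} ⊔ C, v ≠ 0 ∧ hammingNorm v ≠ q ^ (k - 1) :=
  simplex_maximal_equidistant_general hq hk C hC c hc
end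

section
/- Suppose q ≥ 5 and k = 2, or q = 2 and k ≥ 4, or q ≥ 3 and k ≥ 3. Then there exist three q-ary simplex codes X₁, X₂, X₃ of dimension k in F_q^n (n = (q^k-1)/(q-1)) that are pairwise distinct, pairwise intersecting in (k-1)-dimensional subspaces, and all contained in a common (k+1)-dimensional subspace of F_q^n. -/
/-!
Let `v₁, …, vₙ` represent the points of `ℙ(F^k)` and let `f : F^k → F` be homogeneous. Evaluating
`(x, t) ∈ F^k × F` at the points `(vᵢ, f vᵢ)` maps `F^k × F` to `F^n`, injectively as soon as `f`
is not additive. The image of the hyperplane `β ⬝ᵥ x + t = 0` is the code with generator columns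
`vᵢ - f(vᵢ) β`; it is a simplex code whenever the shear `x ↦ x - f(x) β` is injective, since the
shear commutes with scalars and so permutes the points of `ℙ(F^k)`. Any two of these codes are
distinct hyperplanes of the `(k+1)`-dimensional image, hence meet in dimension `k - 1`.

Take `f = l` on a proper subspace `U` and `f = 0` off `U`, for a linear form `l` not vanishing
on `U`; such an `f` is not additive. The shear fixes every vector outside `U` and, for `β ∈ U`
with `l β ≠ 1`, maps `U` injectively into itself because it multiplies `l` by `1 - l β`. With `U = {x₁ = 0}` and `l = x₀` there are `(q - 1) q^(k-2)`
admissible `β`, which is at least three in each case of the theorem.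
-/

open Module Submodule

open Matrix Function Finset

section Hyperplanes

variable {F M : Type*} [Field F] [AddCommGroup M] [Module F M]

theorem finrank_inf_eq_sub_one_of_ne {k : ℕ} {X₁ X₂ Y : Submodule F M} [FiniteDimensional F Y]
    (hY : finrank F Y = k + 1) (h₁ : X₁ ≤ Y) (h₂ : X₂ ≤ Y)
    (hX₁ : finrank F X₁ = k) (hX₂ : finrank F X₂ = k) (hne : X₁ ≠ X₂) :
    finrank F ↥(X₁ ⊓ X₂) = k - 1 := by
  have := Submodule.finiteDimensional_of_le h₁
  have := Submodule.finiteDimensional_of_le h₂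
  have hlt : X₁ < X₁ ⊔ X₂ := by
    refine lt_of_le_of_ne le_sup_left fun h => hne ?_
    exact (Submodule.eq_of_le_of_finrank_eq (h ▸ le_sup_right) (by rw [hX₁, hX₂])).symm
  have hsup_gt := Submodule.finrank_lt_finrank_of_lt hlt
  have hsup_le : finrank F ↥(X₁ ⊔ X₂) ≤ k + 1 := hY ▸ Submodule.finrank_mono (sup_le h₁ h₂)
  have := Submodule.finrank_sup_add_finrank_inf_eq X₁ X₂
  omega

end Hyperplanes

section Shear

variable {F V : Type*} [Field F] [AddCommGroup V] [Module F V]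

theorem indicator_submodule_smul (U : Submodule F V) (l : V →ₗ[F] F) (a : F) (x : V) :
    (U : Set V).indicator l (a • x) = a * (U : Set V).indicator l x := by
  by_cases ha : a = 0
  · simp [ha]
  by_cases hx : x ∈ U
  · simp [hx, U.smul_mem a hx]
  · have : a • x ∉ U := fun h => hx (by simpa [ha] using U.smul_mem a⁻¹ h)
    simp [hx, this]

theorem indicator_submodule_add_ne (U : Submodule F V) (l : V →ₗ[F] F) {x y : V}
    (hx : x ∈ U) (hlx : l x ≠ 0) (hy : y ∉ U) :
    (U : Set V).indicator l (x + y) ≠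
      (U : Set V).indicator l x + (U : Set V).indicator l y := by
  have hxy : x + y ∉ U := fun h => hy (by simpa using U.sub_mem h hx)
  simpa [hx, hy, hxy] using hlx.symm

theorem injective_sub_indicator_smul {U : Submodule F V} {l : V →ₗ[F] F} {β : V}
    (hβ : β ∈ U) (hlβ : l β ≠ 1) :
    Injective fun x => x - (U : Set V).indicator l x • β := by
  have hmem : ∀ x, x - (U : Set V).indicator l x • β ∈ U ↔ x ∈ U := fun x => by
    by_cases hx : x ∈ U
    · simpa [hx] using U.sub_mem hx (U.smul_mem (l x) hβ)
    · simp [hx]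
  intro x y hxy
  simp only at hxy
  have hU : x ∈ U ↔ y ∈ U := by rw [← hmem x, ← hmem y, hxy]
  by_cases hx : x ∈ U
  · have hy := hU.mp hx
    simp only [Set.indicator_of_mem (SetLike.mem_coe.mpr hx),
      Set.indicator_of_mem (SetLike.mem_coe.mpr hy)] at hxy
    have hl : l x * (1 - l β) = l y * (1 - l β) := by
      simpa [mul_sub] using congrArg l hxy
    have := mul_right_cancel₀ (sub_ne_zero.mpr hlβ.symm) hl
    simpa [this] using hxy
  · have hy : y ∉ U := hU.not.mp hx
    simpa [hx, hy] using hxy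

theorem ne_zero_of_injective_of_map_smul {g : V → V} (hg : Injective g)
    (hsmul : ∀ (a : F) x, g (a • x) = a • g x) {x : V} (hx : x ≠ 0) : g x ≠ 0 := by
  have h0 : g 0 = 0 := by simpa using hsmul 0 0
  exact fun h => hx (hg (h.trans h0.symm))

theorem ne_smul_of_injective_of_map_smul {g : V → V} (hg : Injective g)
    (hsmul : ∀ (a : F) x, g (a • x) = a • g x) {x y : V} (h : ∀ a : F, y ≠ a • x) (a : F) :
    g y ≠ a • g x :=
  fun h' => h a (hg (h'.trans (hsmul a x).symm))

end Shear

section Codes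

variable {F : Type*} [Field F] {k n : ℕ}

theorem exists_dotProduct_ne_zero {u : Fin k → F} (hu : u ≠ 0) : ∃ x, u ⬝ᵥ x ≠ 0 := by
  by_contra! h
  exact hu (dotProduct_eq_zero u h)

theorem isSimplexCode_range {D : (Fin k → F) →ₗ[F] (Fin n → F)} (hD : Injective D)
    (u : Fin n → Fin k → F) (hDu : ∀ x i, D x i = u i ⬝ᵥ x) (hu0 : ∀ i, u i ≠ 0)
    (hu : ∀ i j, i ≠ j → ∀ a : F, u j ≠ a • u i) : IsSimplexCode k (LinearMap.range D) := by
  refine ⟨by rw [LinearMap.finrank_range_of_inj hD, Module.finrank_fin_fun], fun i => ?_,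
    fun i j hij a => ?_⟩
  · obtain ⟨x, hx⟩ := exists_dotProduct_ne_zero (hu0 i)
    exact ⟨D x, ⟨x, rfl⟩, by rwa [hDu]⟩
  · obtain ⟨x, hx⟩ := exists_dotProduct_ne_zero (sub_ne_zero.mpr (hu i j hij a))
    refine ⟨D x, ⟨x, rfl⟩, ?_⟩
    rwa [hDu, hDu, ← smul_eq_mul, ← smul_dotProduct, ← sub_ne_zero, ← sub_dotProduct]

/-- Evaluation of `(x, t) ∈ F^k × F` at the points `(v i, f (v i))` of the graph of `f`. -/
def pointEval (v : Fin n → Fin k → F) (f : (Fin k → F) → F) :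
    (Fin k → F) × F →ₗ[F] (Fin n → F) :=
  (Matrix.of v).mulVecLin.coprod (LinearMap.toSpanSingleton F _ (f ∘ v))

theorem pointEval_apply (v : Fin n → Fin k → F) (f : (Fin k → F) → F) (x : Fin k → F) (t : F)
    (i : Fin n) : pointEval v f (x, t) i = v i ⬝ᵥ x + t * f (v i) := by
  simp [pointEval, mulVec]

/-- A parametrisation of the hyperplane `β ⬝ᵥ x + t = 0` of `F^k × F`. -/
def hyperplaneParam (β : Fin k → F) : (Fin k → F) →ₗ[F] (Fin k → F) × F :=
  LinearMap.id.prod (-dotProductBilin F F β)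

theorem hyperplaneParam_apply (β x : Fin k → F) : hyperplaneParam β x = (x, -(β ⬝ᵥ x)) := rfl

theorem injective_hyperplaneParam (β : Fin k → F) : Injective (hyperplaneParam β) :=
  fun _ _ => congrArg Prod.fst

theorem range_hyperplaneParam_injective :
    Injective fun β : Fin k → F => LinearMap.range (hyperplaneParam β) := by
  intro β β' h
  simp only at h
  refine dotProduct_eq β β' fun x => ?_
  obtain ⟨y, hy⟩ : hyperplaneParam β x ∈ LinearMap.range (hyperplaneParam β') := h ▸ ⟨x, rfl⟩
  simp only [hyperplaneParam_apply, Prod.ext_iff, neg_inj] at hy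
  rw [← hy.2, hy.1]

theorem pointEval_hyperplaneParam (v : Fin n → Fin k → F) (f : (Fin k → F) → F)
    (β x : Fin k → F) (i : Fin n) :
    pointEval v f (hyperplaneParam β x) i = (v i - f (v i) • β) ⬝ᵥ x := by
  rw [hyperplaneParam_apply, pointEval_apply, sub_dotProduct, smul_dotProduct, smul_eq_mul]
  ring

theorem injective_pointEval {v : Fin n → Fin k → F} {f : (Fin k → F) → F}
    (hv : ∀ x, x ≠ 0 → ∃ i, ∃ a : F, x = a • v i) (hf : ∀ (a : F) x, f (a • x) = a * f x)
    (hadd : ∃ x y, f (x + y) ≠ f x + f y) : Injective (pointEval v f) := by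
  rw [← LinearMap.ker_eq_bot, LinearMap.ker_eq_bot']
  rintro ⟨x, t⟩ h
  have hvanish : ∀ u, u ⬝ᵥ x + t * f u = 0 := by
    intro u
    by_cases hu : u = 0
    · simp [hu, show f 0 = 0 by simpa using hf 0 0]
    obtain ⟨i, a, rfl⟩ := hv u hu
    have hi := congrFun h i
    rw [pointEval_apply, Pi.zero_apply] at hi
    rw [smul_dotProduct, hf, smul_eq_mul]
    linear_combination a * hi
  have ht : t = 0 := by
    by_contra ht
    obtain ⟨y, z, hyz⟩ := hadd
    refine hyz (mul_left_cancel₀ ht ?_)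
    linear_combination hvanish (y + z) - hvanish y - hvanish z - add_dotProduct y z x
  have hx : x = 0 := dotProduct_eq_zero x fun u => by
    simpa [ht, dotProduct_comm] using hvanish u
  simp [hx, ht]

theorem isSimplexCode_range_pointEval_comp {v : Fin n → Fin k → F} {f : (Fin k → F) → F}
    {β : Fin k → F} (hv0 : ∀ i, v i ≠ 0) (hv : ∀ i j, i ≠ j → ∀ a : F, v j ≠ a • v i)
    (hf : ∀ (a : F) x, f (a • x) = a * f x) (hL : Injective (pointEval v f))
    (hshear : Injective fun x => x - f x • β) :
    IsSimplexCode k (LinearMap.range (pointEval v f ∘ₗ hyperplaneParam β)) := by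
  have hsmul : ∀ (a : F) x, a • x - f (a • x) • β = a • (x - f x • β) := fun a x => by
    rw [hf, smul_sub, mul_smul]
  exact isSimplexCode_range (hL.comp (injective_hyperplaneParam β)) _
    (pointEval_hyperplaneParam v f β)
    (fun i => ne_zero_of_injective_of_map_smul hshear hsmul (hv0 i))
    (fun i j hij => ne_smul_of_injective_of_map_smul hshear hsmul (hv i j hij))

end Codes

section Counting

variable {F : Type*} [Field F] [Fintype F]

theorem exists_projective_enumeration {q n k : ℕ} (hq : Fintype.card F = q)
    (hn : n * (q - 1) = q ^ k - 1) :
    ∃ v : Fin n → Fin k → F, (∀ i, v i ≠ 0) ∧ (∀ i j, i ≠ j → ∀ a : F, v j ≠ a • v i) ∧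
      ∀ x, x ≠ 0 → ∃ i, ∃ a : F, x = a • v i := by
  have hq1 : 0 < q - 1 := by have := Fintype.one_lt_card (α := F); omega
  have hcard : Nat.card (Projectivization F (Fin k → F)) = n := by
    have h := Projectivization.card F (Fin k → F)
    rw [Nat.card_fun, Nat.card_fin, Nat.card_eq_fintype_card, hq, ← hn] at h
    exact (Nat.eq_of_mul_eq_mul_right hq1 h).symm
  let e := (Finite.equivFinOfCardEq hcard).symm
  refine ⟨fun i => (e i).rep, fun i => (e i).rep_nonzero, fun i j hij a h => hij ?_, ?_⟩
  · refine (e.injective ?_).symm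
    rw [← (e i).mk_rep, ← (e j).mk_rep, Projectivization.mk_eq_mk_iff']
    exact ⟨a, h.symm⟩
  · intro x hx
    obtain ⟨a, ha⟩ := Projectivization.exists_smul_eq_mk_rep F x hx
    refine ⟨e.symm (Projectivization.mk F x hx), ↑a⁻¹, ?_⟩
    simp [← ha, Units.smul_def, smul_smul]

/-- There are `(q - 1) q ^ m` vectors `β ∈ F^(m+2)` with `β 1 = 0` and `β 0 ≠ 1`. -/
theorem two_lt_card_shear_vectors [DecidableEq F] {q m : ℕ} (hq : Fintype.card F = q)
    (hcase : (5 ≤ q ∧ m = 0) ∨ (q = 2 ∧ 2 ≤ m) ∨ (3 ≤ q ∧ 1 ≤ m)) :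
    2 < #{β : Fin (m + 2) → F | β 1 = 0 ∧ β 0 ≠ 1} := by
  let t : Fin (m + 2) → Finset F := Fin.cons (univ.erase 1) (Fin.cons {0} fun _ => univ)
  have hsub : Fintype.piFinset t ⊆ ({β | β 1 = 0 ∧ β 0 ≠ 1} : Finset (Fin (m + 2) → F)) := by
    intro β hβ
    rw [Fintype.mem_piFinset] at hβ
    have h0 := hβ 0
    have h1 := hβ 1
    simp_all [t]
  have hcard : #(Fintype.piFinset t) = (q - 1) * q ^ m := by
    simp [t, Fin.prod_univ_succ, hq]
  refine lt_of_lt_of_le ?_ (card_le_card hsub)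
  rw [hcard]
  rcases hcase with ⟨hq, rfl⟩ | ⟨rfl, hm⟩ | ⟨hq, hm⟩
  · rw [pow_zero, mul_one]; omega
  · calc 2 < 2 ^ 2 := by norm_num
      _ ≤ 2 ^ m := Nat.pow_le_pow_right two_pos hm
      _ = (2 - 1) * 2 ^ m := by simp
  · calc 2 < 2 * 3 := by norm_num
      _ ≤ (q - 1) * q ^ m :=
        Nat.mul_le_mul (by omega) ((Nat.le_self_pow (by omega) q).trans' (by omega))

end Counting

theorem exists_top_of_simplex_codes {F : Type*} [Field F] [Fintype F]
    {q n k : ℕ} (hq : Fintype.card F = q)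
    (hcase : (5 ≤ q ∧ k = 2) ∨ (q = 2 ∧ 4 ≤ k) ∨ (3 ≤ q ∧ 3 ≤ k))
    (hn : n * (q - 1) = q ^ k - 1) :
    ∃ X₁ X₂ X₃ : Submodule F (Fin n → F),
      IsSimplexCode k X₁ ∧ IsSimplexCode k X₂ ∧ IsSimplexCode k X₃ ∧
      X₁ ≠ X₂ ∧ X₁ ≠ X₃ ∧ X₂ ≠ X₃ ∧
      Module.finrank F ↥(X₁ ⊓ X₂) = k - 1 ∧
      Module.finrank F ↥(X₁ ⊓ X₃) = k - 1 ∧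
      Module.finrank F ↥(X₂ ⊓ X₃) = k - 1 ∧
      ∃ Y : Submodule F (Fin n → F), Module.finrank F ↥Y = k + 1 ∧
        X₁ ≤ Y ∧ X₂ ≤ Y ∧ X₃ ≤ Y := by
  classical
  obtain ⟨m, rfl⟩ : ∃ m, k = m + 2 := ⟨k - 2, by omega⟩
  obtain ⟨v, hv0, hv, hv_span⟩ := exists_projective_enumeration hq hn
  obtain ⟨β₁, hβ₁, β₂, hβ₂, β₃, hβ₃, h₁₂, h₁₃, h₂₃⟩ :=
    Finset.two_lt_card.mp (two_lt_card_shear_vectors (m := m) hq (by omega))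
  let U : Submodule F (Fin (m + 2) → F) := LinearMap.ker (LinearMap.proj 1)
  let l : (Fin (m + 2) → F) →ₗ[F] F := LinearMap.proj 0
  let f := (U : Set (Fin (m + 2) → F)).indicator l
  have hf := indicator_submodule_smul U l
  have hL : Injective (pointEval v f) := injective_pointEval hv_span hf
    ⟨_, _, indicator_submodule_add_ne U l (x := Pi.single 0 1)
      (y := Pi.single 1 1) (by simp [U]) (by simp [l]) (by simp [U])⟩
  let X β := LinearMap.range (pointEval v f ∘ₗ hyperplaneParam β)
  have hX : ∀ β ∈ ({β | β 1 = 0 ∧ β 0 ≠ 1} : Finset (Fin (m + 2) → F)),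
      IsSimplexCode (m + 2) (X β) := fun β hβ => by
    simp only [mem_filter_univ] at hβ
    exact isSimplexCode_range_pointEval_comp hv0 hv hf hL
      (injective_sub_indicator_smul (by simpa [U] using hβ.1) hβ.2)
  have hX_inj : Injective X := fun β β' h => range_hyperplaneParam_injective <|
    Submodule.map_injective_of_injective hL (by simpa only [X, LinearMap.range_comp] using h)
  have hY : finrank F (LinearMap.range (pointEval v f)) = m + 2 + 1 := by
    rw [LinearMap.finrank_range_of_inj hL, finrank_prod, finrank_fin_fun, finrank_self]
  have hXY β : X β ≤ LinearMap.range (pointEval v f) := LinearMap.range_comp_le_range _ _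
  have hinf {β β'} (hβ : β ∈ _) (hβ' : β' ∈ _) (hne : β ≠ β') :=
    finrank_inf_eq_sub_one_of_ne hY (hXY β) (hXY β') (hX β hβ).1 (hX β' hβ').1 (hX_inj.ne hne)
  exact ⟨X β₁, X β₂, X β₃, hX _ hβ₁, hX _ hβ₂, hX _ hβ₃, hX_inj.ne h₁₂, hX_inj.ne h₁₃,
    hX_inj.ne h₂₃, hinf hβ₁ hβ₂ h₁₂, hinf hβ₁ hβ₃ h₁₃, hinf hβ₂ hβ₃ h₂₃, _, hY, hXY _, hXY _,
    hXY _⟩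
end
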